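/- arXiv:1204.5269 — 6 statements merged into one kernel-verified Lean document; each statement's English description precedes it below -/
import Mathlib

section
/- Every closed subgroup of the additive group ℂ is one of: the trivial group, ℝ·v for some nonzero v ∈ ℂ, ℤ·v for some nonzero v ∈ ℂ, ℤ·v ⊕ ℤ·w for ℝ-linearly independent v, w ∈ ℂ, ℝ·v ⊕ ℤ·w for ℝ-linearly independent v, w, or all of ℂ. -/
open Filter Topology

/-!
A closed subgroup `H` of `ℂ` is either discrete or contains a real line. Indeed, if `H` has
arbitrarily short nonzero elements, their directions accumulate at some unit vector `u`; the
integer multiples of a short element `x` come within `‖x‖` of every point of `ℝ • x`, so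
closedness gives `ℝ • u ⊆ H`.

A discrete subgroup of a finite-dimensional real space has a `ℤ`-basis, and comparing ranks
(`Real.finrank_eq_int_finrank_of_discrete`) shows that this basis is `ℝ`-linearly independent;
in `ℂ` it has at most two elements.

If `ℝ • u ⊆ H`, then `H = ℝ • u ⊕ K • (I * u)` with `K = {t | t • (I * u) ∈ H}` a closed
subgroup of `ℝ`, hence `ℝ` or `a ℤ`.
-/

section Normed

variable {E : Type*}

theorem AddSubgroup.exists_mem_ne_zero_norm_lt_of_not_discreteTopology
    [SeminormedAddCommGroup E] {H : AddSubgroup E} (h : ¬DiscreteTopology H) {ε : ℝ}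
    (hε : 0 < ε) : ∃ x ∈ H, x ≠ 0 ∧ ‖x‖ < ε := by
  contrapose! h
  rw [discreteTopology_iff_isOpen_singleton_zero, Metric.isOpen_singleton_iff]
  refine ⟨ε, hε, fun y hy => ?_⟩
  by_contra hy0
  exact (h y y.2 (by simpa using hy0)).not_gt (by simpa using hy)

variable [NormedAddCommGroup E] [NormedSpace ℝ E]

theorem exists_zsmul_norm_sub_smul_le (x : E) (s : ℝ) : ∃ n : ℤ, ‖n • x - s • x‖ ≤ ‖x‖ := by
  refine ⟨⌊s⌋, ?_⟩
  rw [← Int.cast_smul_eq_zsmul ℝ, ← sub_smul, norm_smul, Real.norm_eq_abs, abs_sub_comm,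
    Int.self_sub_floor, abs_of_nonneg (Int.fract_nonneg s)]
  exact mul_le_of_le_one_left (norm_nonneg x) (Int.fract_lt_one s).le

theorem AddSubgroup.exists_forall_smul_mem_of_not_discreteTopology [ProperSpace E]
    {H : AddSubgroup E} (hH : IsClosed (H : Set E)) (h : ¬DiscreteTopology H) :
    ∃ u : E, u ≠ 0 ∧ ∀ t : ℝ, t • u ∈ H := by
  choose x hxH hx0 hx_lt using fun n : ℕ =>
    exists_mem_ne_zero_norm_lt_of_not_discreteTopology h (Nat.one_div_pos_of_nat (n := n))
  have hx : Tendsto (fun n => ‖x n‖) atTop (𝓝 0) :=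
    squeeze_zero (fun n => norm_nonneg _) (fun n => (hx_lt n).le)
      tendsto_one_div_add_atTop_nhds_zero_nat
  have hdir : ∀ n, ‖x n‖⁻¹ • x n ∈ Metric.sphere (0 : E) 1 := fun n => by
    simpa using norm_smul_inv_norm (𝕜 := ℝ) (hx0 n)
  obtain ⟨u, hu, φ, hφ, hlim⟩ := (isCompact_sphere (0 : E) 1).tendsto_subseq hdir
  refine ⟨u, ne_zero_of_mem_unit_sphere ⟨u, hu⟩, fun t => ?_⟩
  choose n hn using fun k => exists_zsmul_norm_sub_smul_le (x (φ k)) (t * ‖x (φ k)‖⁻¹)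
  have hclose : Tendsto (fun k => n k • x (φ k) - t • (‖x (φ k)‖⁻¹ • x (φ k))) atTop (𝓝 0) :=
    squeeze_zero_norm (fun k => by rw [smul_smul]; exact hn k) (hx.comp hφ.tendsto_atTop)
  refine hH.closure_subset <| mem_closure_of_tendsto (b := atTop) ?_
    (Eventually.of_forall fun k => zsmul_mem (hxH (φ k)) (n k))
  simpa using hclose.add (hlim.const_smul t)

theorem AddSubgroup.exists_linearIndependent_eq_closure [FiniteDimensional ℝ E]
    (H : AddSubgroup E) [DiscreteTopology H] :
    ∃ (n : ℕ) (b : Fin n → E), LinearIndependent ℝ b ∧ H = AddSubgroup.closure (Set.range b) := by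
  let L := H.toIntSubmodule
  have : DiscreteTopology L := ‹DiscreteTopology H›
  let b₀ := Module.finBasis ℤ L
  let b := L.subtype ∘ b₀
  have hspan : Submodule.span ℤ (Set.range b) = L := by
    rw [Set.range_comp, Submodule.span_image, b₀.span_eq, Submodule.map_top,
      Submodule.range_subtype]
  refine ⟨_, b, ?_, by rw [← Submodule.span_int_eq_addSubgroupClosure, hspan]; rfl⟩
  have hZ : LinearIndependent ℤ b := b₀.linearIndependent.map' L.subtype L.ker_subtype
  have hdisc : DiscreteTopology (Submodule.span ℤ (Set.range b)) := by rwa [hspan]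
  rw [linearIndependent_iff_card_eq_finrank_span] at hZ ⊢
  rw [hZ, Real.finrank_eq_int_finrank_of_discrete hdisc]

end Normed

theorem AddSubgroup.eq_top_or_exists_eq_zmultiples_of_isClosed {G : Type*} [AddCommGroup G]
    [LinearOrder G] [IsOrderedAddMonoid G] [TopologicalSpace G] [OrderTopology G] [Archimedean G]
    {K : AddSubgroup G} (hK : IsClosed (K : Set G)) :
    K = ⊤ ∨ ∃ a, K = AddSubgroup.zmultiples a := by
  rcases K.dense_or_cyclic with hdense | ⟨a, rfl⟩
  · exact .inl (SetLike.coe_injective (hK.closure_eq.symm.trans hdense.closure_eq))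
  · exact .inr ⟨a, (AddSubgroup.zmultiples_eq_closure a).symm⟩

namespace Complex

variable {H : AddSubgroup ℂ} {u : ℂ}

theorem re_div_smul_add_im_div_smul (hu : u ≠ 0) (z : ℂ) :
    (z / u).re • u + (z / u).im • (I * u) = z := by
  rw [real_smul, real_smul, ← mul_assoc, ← add_mul, re_add_im, div_mul_cancel₀ z hu]

theorem linearIndependent_smul_I_mul (hu : u ≠ 0) {a : ℝ} (ha : a ≠ 0) :
    LinearIndependent ℝ ![u, a • (I * u)] := by
  refine LinearIndependent.pair_iff.2 fun s t hst => ?_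
  have h : ((s : ℂ) + (t * a : ℝ) * I) * u = 0 := by
    rw [← hst, real_smul, real_smul, real_smul]; push_cast; ring
  have h' := (mul_eq_zero.1 h).resolve_right hu
  simp only [Complex.ext_iff, add_re, ofReal_re, mul_re, I_re, mul_zero, ofReal_im, I_im,
    mul_one, sub_self, add_zero, zero_re, add_im, mul_im, zero_add, zero_im] at h'
  exact ⟨h'.1, (mul_eq_zero.1 h'.2).resolve_right ha⟩

theorem mem_iff_im_div_smul_mem (hu : u ≠ 0) (hline : ∀ t : ℝ, t • u ∈ H) (z : ℂ) :
    z ∈ H ↔ (z / u).im • (I * u) ∈ H := by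
  conv_lhs => rw [← re_div_smul_add_im_div_smul hu z]
  exact add_mem_cancel_left (hline _)

theorem eq_span_sup_zmultiples_of_forall_smul_mem (hu : u ≠ 0) (hline : ∀ t : ℝ, t • u ∈ H)
    {a : ℝ} (hI : ∀ t : ℝ, t • (I * u) ∈ H ↔ t ∈ AddSubgroup.zmultiples a) :
    H = (Submodule.span ℝ {u}).toAddSubgroup ⊔ AddSubgroup.zmultiples (a • (I * u)) := by
  refine le_antisymm (fun z hz => ?_) (sup_le ?_ ?_)
  · obtain ⟨n, hn⟩ := (hI _).1 ((mem_iff_im_div_smul_mem hu hline z).1 hz)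
    rw [← re_div_smul_add_im_div_smul hu z, ← hn, smul_assoc]
    exact AddSubgroup.add_mem_sup (Submodule.smul_mem _ _ (Submodule.mem_span_singleton_self u))
      ⟨n, rfl⟩
  · rintro _ h
    obtain ⟨t, rfl⟩ := Submodule.mem_span_singleton.1 h
    exact hline t
  · exact (AddSubgroup.zmultiples_le_of_mem ((hI a).2 (AddSubgroup.mem_zmultiples a)))

theorem eq_span_or_eq_span_sup_zmultiples_or_eq_top_of_forall_smul_mem
    (hH : IsClosed (H : Set ℂ)) (hu : u ≠ 0) (hline : ∀ t : ℝ, t • u ∈ H) :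
    (∃ v : ℂ, v ≠ 0 ∧ H = (Submodule.span ℝ {v}).toAddSubgroup) ∨
    (∃ v w : ℂ, LinearIndependent ℝ ![v, w] ∧
      H = (Submodule.span ℝ {v}).toAddSubgroup ⊔ AddSubgroup.zmultiples w) ∨
    H = ⊤ := by
  let K := H.comap (LinearMap.toSpanSingleton ℝ ℂ (I * u)).toAddMonoidHom
  have hK : IsClosed (K : Set ℝ) := hH.preimage (continuous_id.smul continuous_const)
  rcases AddSubgroup.eq_top_or_exists_eq_zmultiples_of_isClosed hK with hK | ⟨a, hK⟩
  · refine .inr (.inr (eq_top_iff.2 fun z _ => ?_))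
    exact (mem_iff_im_div_smul_mem hu hline z).2 (hK ▸ AddSubgroup.mem_top _ : _ ∈ K)
  have hsup := eq_span_sup_zmultiples_of_forall_smul_mem hu hline (a := a) (fun t => hK ▸ Iff.rfl)
  rcases eq_or_ne a 0 with rfl | ha
  · rw [zero_smul, AddSubgroup.zmultiples_zero_eq_bot, sup_bot_eq] at hsup
    exact .inl ⟨u, hu, hsup⟩
  · exact .inr (.inl ⟨u, a • (I * u), linearIndependent_smul_I_mul hu ha, hsup⟩)

theorem eq_bot_or_eq_zmultiples_or_eq_zmultiples_sup_of_discreteTopology [DiscreteTopology H] :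
    H = ⊥ ∨
    (∃ v : ℂ, v ≠ 0 ∧ H = AddSubgroup.zmultiples v) ∨
    (∃ v w : ℂ, LinearIndependent ℝ ![v, w] ∧
      H = AddSubgroup.zmultiples v ⊔ AddSubgroup.zmultiples w) := by
  obtain ⟨n, b, hb, rfl⟩ := H.exists_linearIndependent_eq_closure
  have hn : n ≤ 2 := by simpa using hb.fintype_card_le_finrank
  interval_cases n
  · exact .inl (by simp)
  · refine .inr (.inl ⟨b 0, hb.ne_zero 0, ?_⟩)
    rw [Set.range_unique, AddSubgroup.zmultiples_eq_closure]; rfl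
  · have hb2 : ![b 0, b 1] = b := by ext i; fin_cases i <;> rfl
    refine .inr (.inr ⟨b 0, b 1, hb2 ▸ hb, ?_⟩)
    rw [← hb2, Matrix.range_cons, Matrix.range_cons, Matrix.range_empty, Set.union_empty,
      AddSubgroup.closure_union, AddSubgroup.zmultiples_eq_closure,
      AddSubgroup.zmultiples_eq_closure]
    simp

end Complex

/-- Every closed subgroup of the additive group `ℂ` is one of: the trivial group, `ℝ·v`
for some `v ≠ 0`, `ℤ·v` for some `v ≠ 0`, `ℤ·v ⊕ ℤ·w` for `ℝ`-linearly independent `v, w`,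
`ℝ·v ⊕ ℤ·w` for `ℝ`-linearly independent `v, w`, or all of `ℂ`. -/
theorem stmt5 (H : AddSubgroup ℂ) (hH : IsClosed (H : Set ℂ)) :
    H = ⊥ ∨
    (∃ v : ℂ, v ≠ 0 ∧ H = (Submodule.span ℝ {v}).toAddSubgroup) ∨
    (∃ v : ℂ, v ≠ 0 ∧ H = AddSubgroup.zmultiples v) ∨
    (∃ v w : ℂ, LinearIndependent ℝ ![v, w] ∧
      H = AddSubgroup.zmultiples v ⊔ AddSubgroup.zmultiples w) ∨
    (∃ v w : ℂ, LinearIndependent ℝ ![v, w] ∧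
      H = (Submodule.span ℝ {v}).toAddSubgroup ⊔ AddSubgroup.zmultiples w) ∨
    H = ⊤ := by
  by_cases hdisc : DiscreteTopology H
  · rcases Complex.eq_bot_or_eq_zmultiples_or_eq_zmultiples_sup_of_discreteTopology (H := H)
      with h | h | h
    exacts [.inl h, .inr (.inr (.inl h)), .inr (.inr (.inr (.inl h)))]
  · obtain ⟨u, hu, hline⟩ := H.exists_forall_smul_mem_of_not_discreteTopology hH hdisc
    rcases Complex.eq_span_or_eq_span_sup_zmultiples_or_eq_top_of_forall_smul_mem hH hu hline
      with h | h | h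
    exacts [.inr (.inl h), .inr (.inr (.inr (.inr (.inl h)))), .inr (.inr (.inr (.inr (.inr h))))]
end

section
/- The Chabauty space of closed subgroups of a locally compact topological group is compact. -/
open Filter Topology
/-- The Chabauty (Fell) topology on subsets of `G`: generated by the sets
`{S | S ∩ K = ∅}` for `K` compact and `{S | S ∩ U ≠ ∅}` for `U` open. -/
def chabautyTopSet (G : Type*) [TopologicalSpace G] : TopologicalSpace (Set G) :=
  TopologicalSpace.generateFrom
    ({ A | ∃ K : Set G, IsCompact K ∧ A = {S : Set G | S ∩ K = ∅} } ∪
     { A | ∃ U : Set G, IsOpen U ∧ A = {S : Set G | (S ∩ U).Nonempty} })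

/-- The space of closed subgroups of a topological group `G`. -/
def ClosedSubgroups (G : Type*) [Group G] [TopologicalSpace G] :=
  {H : Subgroup G // IsClosed (H : Set G)}

/-- The Chabauty topology on the space of closed subgroups. -/
instance (G : Type*) [Group G] [TopologicalSpace G] : TopologicalSpace (ClosedSubgroups G) :=
  TopologicalSpace.induced (fun H : ClosedSubgroups G => ((H.1 : Subgroup G) : Set G))
    (chabautyTopSet G)

/-- The space of closed additive subgroups of a topological additive group `G`. -/
def ClosedAddSubgroups (G : Type*) [AddGroup G] [TopologicalSpace G] :=
  {H : AddSubgroup G // IsClosed (H : Set G)}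

/-- The Chabauty topology on the space of closed additive subgroups. -/
instance (G : Type*) [AddGroup G] [TopologicalSpace G] :
    TopologicalSpace (ClosedAddSubgroups G) :=
  TopologicalSpace.induced (fun H : ClosedAddSubgroups G => ((H.1 : AddSubgroup G) : Set G))
    (chabautyTopSet G)

/-- Sequential Chabauty convergence of a sequence of (closed) subsets `H n` to `L`:
(1) every point of `L` is a limit of points `h n ∈ H n`, and
(2) every cluster point of any sequence of points `h n ∈ H n` belongs to `L`. -/
def ChabConvSeq {G : Type*} [TopologicalSpace G] (H : ℕ → Set G) (L : Set G) : Prop :=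
  (∀ h ∈ L, ∃ u : ℕ → G, (∀ n, u n ∈ H n) ∧ Filter.Tendsto u Filter.atTop (nhds h)) ∧
  (∀ u : ℕ → G, (∀ n, u n ∈ H n) → ∀ x : G, MapClusterPt x Filter.atTop u → x ∈ L)

/-!
An ultrafilter `F` of subsets of `X` converges in the Fell topology to the set `chabautyLimit F`
of points every neighbourhood of which `F`-almost every set meets: the sub-basic conditions
"meets an open set" hold by definition, and "misses a compact set `K`" follows by covering `K`
with finitely many neighbourhoods that `F`-almost every set misses. Hence the Fell topology is
compact. When `F` lives on closed subgroups of a group with continuous multiplication and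
inversion, the limit set is a closed subgroup, so it is the limit in the Chabauty space.
-/

section Fell

variable {X : Type*} [TopologicalSpace X]

def chabautyLimit (F : Ultrafilter (Set X)) : Set X :=
  {x | ∀ U ∈ 𝓝 x, ∀ᶠ S in F, (S ∩ U).Nonempty}

theorem isClosed_chabautyLimit (F : Ultrafilter (Set X)) : IsClosed (chabautyLimit F) := by
  refine isOpen_compl_iff.1 (isOpen_iff_mem_nhds.2 fun x hx => ?_)
  simp only [chabautyLimit, Set.mem_compl_iff, Set.mem_ofPred_eq, not_forall] at hx
  obtain ⟨U, hU, hUF⟩ := hx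
  filter_upwards [interior_mem_nhds.2 hU] with y hy hyL
  exact hUF <| (hyL _ (isOpen_interior.mem_nhds hy)).mono fun S hS =>
    hS.mono (Set.inter_subset_inter_right _ interior_subset)

theorem eventually_disjoint_of_isCompact (F : Ultrafilter (Set X)) {K : Set X}
    (hK : IsCompact K) (hLK : Disjoint (chabautyLimit F) K) : ∀ᶠ S in F, Disjoint S K := by
  refine hK.induction_on (p := fun t => ∀ᶠ S in F, Disjoint S t) (by simp)
    (fun s t hst ht => ht.mono fun S hS => hS.mono_right hst)
    (fun s t hs ht => (hs.and ht).mono fun S hS => Set.disjoint_union_right.2 hS) ?_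
  intro x hxK
  have hxL : x ∉ chabautyLimit F := Set.disjoint_right.1 hLK hxK
  simp only [chabautyLimit, Set.mem_ofPred_eq, not_forall] at hxL
  obtain ⟨U, hU, hUF⟩ := hxL
  refine ⟨U, mem_nhdsWithin_of_mem_nhds hU, ?_⟩
  filter_upwards [Ultrafilter.compl_mem_iff_notMem.2 hUF] with S hS
  exact Set.disjoint_iff_inter_eq_empty.2 (Set.not_nonempty_iff_eq_empty.1 hS)

theorem le_nhds_chabautyLimit (F : Ultrafilter (Set X)) :
    (F : Filter (Set X)) ≤ @nhds _ (chabautyTopSet X) (chabautyLimit F) := by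
  rw [chabautyTopSet, TopologicalSpace.nhds_generateFrom]
  refine le_iInf₂ fun s ⟨hLs, hs⟩ => le_principal_iff.2 ?_
  rcases hs with ⟨K, hK, rfl⟩ | ⟨U, hU, rfl⟩
  · exact (eventually_disjoint_of_isCompact F hK (Set.disjoint_iff_inter_eq_empty.2 hLs)).mono
      fun S hS => Set.disjoint_iff_inter_eq_empty.1 hS
  · obtain ⟨x, hxL, hxU⟩ := hLs
    exact hxL U (hU.mem_nhds hxU)

end Fell

section Subgroups

variable {G : Type*} [Group G] [TopologicalSpace G] [ContinuousMul G] [ContinuousInv G]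

def chabautyLimitSubgroup (F : Ultrafilter (Subgroup G)) : Subgroup G where
  carrier := chabautyLimit (F.map SetLike.coe)
  one_mem' _ hU := eventually_map.2 <| .of_forall fun H => ⟨1, H.one_mem, mem_of_mem_nhds hU⟩
  mul_mem' {x y} hx hy U hU := by
    obtain ⟨V, hV, W, hW, hVW⟩ := mem_nhds_prod_iff.1 (tendsto_mul (M := G) (a := x) (b := y) hU)
    exact (eventually_map.1 (hx V hV)).and (eventually_map.1 (hy W hW)) |>.mono
      fun H ⟨⟨a, haH, haV⟩, ⟨b, hbH, hbW⟩⟩ =>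
        ⟨a * b, H.mul_mem haH hbH, hVW (Set.mk_mem_prod haV hbW)⟩
  inv_mem' {x} hx U hU :=
    (eventually_map.1 (hx _ (tendsto_inv x hU))).mono fun H ⟨a, haH, haU⟩ =>
      ⟨a⁻¹, H.inv_mem haH, haU⟩

end Subgroups

theorem stmt9_general {G : Type*} [Group G] [TopologicalSpace G] [IsTopologicalGroup G] :
    CompactSpace (ClosedSubgroups G) := by
  refine ⟨isCompact_iff_ultrafilter_le_nhds.2 fun F _ => ?_⟩
  let L := chabautyLimitSubgroup (F.map fun H : ClosedSubgroups G => H.1)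
  refine ⟨⟨L, isClosed_chabautyLimit _⟩, Set.mem_univ _, ?_⟩
  refine (@nhds_induced _ _ (chabautyTopSet G) _ _).symm ▸ map_le_iff_le_comap.1 ?_
  exact le_nhds_chabautyLimit ((F.map fun H : ClosedSubgroups G => H.1).map SetLike.coe)

/-- The Chabauty space of closed subgroups of a locally compact group is compact. -/
theorem stmt9 {G : Type*} [Group G] [TopologicalSpace G] [IsTopologicalGroup G]
    [LocallyCompactSpace G] :
    CompactSpace (ClosedSubgroups G) :=
  stmt9_general
end

section
/- If a sequence of lattices Λ_n = ℤv_n ⊕ ℤw_n in ℂ satisfies v_n → v ≠ 0 and |w_n| → ∞ with w_n/|w_n| having no accumulation in ℝv/|v| directions forcing degeneracy, then Λ_n converges in the Chabauty topology to the closed subgroup ℤv. -/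
open Filter Topology
/-! Write a point of `ℤ v n + ℤ w n` as `a n * v n + b n * w n` and follow it along an
ultrafilter on which it converges. If `b n ≠ 0` there, dividing by `b n * ‖w n‖`, whose norm
tends to infinity, shows that a real multiple of `v n` plus the direction `w n / ‖w n‖` tends
to `0`; the limiting direction would then lie on the line `ℝ v₀`, which is excluded. Hence
`b n = 0` eventually, and a limit of the points `a n * v n` lies in the closed discrete
group `ℤ v₀`. -/

theorem Filter.Tendsto.mul_const_of_tendsto_mul {α K : Type*} [DivisionRing K]
    [TopologicalSpace K] [T1Space K] [ContinuousMul K] [ContinuousInv₀ K]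
    {l : Filter α} {c v : α → K} {y v₀ : K}
    (hcv : Tendsto (fun i => c i * v i) l (𝓝 y)) (hv : Tendsto v l (𝓝 v₀)) (hv₀ : v₀ ≠ 0) :
    Tendsto (fun i => c i * v₀) l (𝓝 y) := by
  have h := hcv.mul ((hv.inv₀ hv₀).mul_const v₀)
  rw [inv_mul_cancel₀ hv₀, mul_one] at h
  refine h.congr' ?_
  filter_upwards [hv.eventually_ne hv₀] with i hi
  rw [mul_assoc, mul_inv_cancel_left₀ hi]

theorem mem_span_singleton_of_tendsto_ofReal_mul_add {α : Type*} {l : Filter α} [l.NeBot]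
    {c : α → ℝ} {v d : α → ℂ} {v₀ d₀ : ℂ}
    (h : Tendsto (fun i => (c i : ℂ) * v i + d i) l (𝓝 0)) (hv : Tendsto v l (𝓝 v₀))
    (hv₀ : v₀ ≠ 0) (hd : Tendsto d l (𝓝 d₀)) :
    d₀ ∈ Submodule.span ℝ {v₀} := by
  have hcv : Tendsto (fun i => (c i : ℂ) * v i) l (𝓝 (-d₀)) := by
    simpa using h.sub hd
  rw [← neg_mem_iff]
  refine (Submodule.span ℝ {v₀}).closed_of_finiteDimensional.mem_of_tendsto
    (hcv.mul_const_of_tendsto_mul hv hv₀) (Eventually.of_forall fun i => ?_)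
  rw [SetLike.mem_coe, ← Complex.real_smul]
  exact Submodule.smul_mem _ _ (Submodule.mem_span_singleton_self v₀)

theorem mem_zmultiples_of_tendsto_intCast_mul {α : Type*} {l : Filter α} [l.NeBot]
    {a : α → ℤ} {v : α → ℂ} {v₀ x : ℂ}
    (h : Tendsto (fun i => (a i : ℂ) * v i) l (𝓝 x)) (hv : Tendsto v l (𝓝 v₀))
    (hv₀ : v₀ ≠ 0) :
    x ∈ AddSubgroup.zmultiples v₀ :=
  AddSubgroup.isClosed_of_discrete.mem_of_tendsto (h.mul_const_of_tendsto_mul hv hv₀)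
    (Eventually.of_forall fun i => by
      simpa only [zsmul_eq_mul, SetLike.mem_coe] using AddSubgroup.zsmul_mem_zmultiples v₀ (a i))

theorem eventually_eq_zero_of_tendsto_intCast_mul_add {α : Type*} (U : Ultrafilter α)
    {a b : α → ℤ} {v w : α → ℂ} {v₀ x : ℂ}
    (hu : Tendsto (fun i => (a i : ℂ) * v i + (b i : ℂ) * w i) U (𝓝 x))
    (hv : Tendsto v U (𝓝 v₀)) (hv₀ : v₀ ≠ 0) (hw : Tendsto (fun i => ‖w i‖) U atTop)
    (hdir : ∀ d₀ : ℂ, MapClusterPt d₀ U (fun i => w i / (‖w i‖ : ℂ)) →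
      d₀ ∉ Submodule.span ℝ ({v₀} : Set ℂ)) :
    ∀ᶠ i in U, b i = 0 := by
  by_contra hb_zero
  have hb : ∀ᶠ i in U, b i ≠ 0 := Ultrafilter.eventually_not.mpr hb_zero
  set d : α → ℂ := fun i => w i / (‖w i‖ : ℂ)
  obtain ⟨d₀, -, hUd₀⟩ := (isCompact_closedBall (0 : ℂ) 1).ultrafilter_le_nhds (U.map d) (by
    rw [Ultrafilter.coe_map, le_principal_iff, mem_map]
    refine univ_mem' fun i => ?_
    simp only [Set.mem_preimage, Metric.mem_closedBall, dist_zero_right, d, norm_div,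
      Complex.norm_real, norm_norm]
    exact div_self_le_one _)
  have hd : Tendsto d U (𝓝 d₀) := hUd₀
  set e : α → ℂ := fun i => (b i : ℂ) * ‖w i‖
  have he : Tendsto (fun i => ‖e i‖) U atTop := by
    refine tendsto_atTop_mono' _ ?_ hw
    filter_upwards [hb] with i hi
    have : (1 : ℝ) ≤ ‖(b i : ℂ)‖ := by
      rw [Complex.norm_intCast]; exact_mod_cast Int.one_le_abs hi
    simpa [e] using le_mul_of_one_le_left (norm_nonneg _) this
  have hue : Tendsto (fun i => ((a i : ℂ) * v i + (b i : ℂ) * w i) / e i) U (𝓝 0) := by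
    rw [tendsto_zero_iff_norm_tendsto_zero]
    simpa only [norm_div] using hu.norm.div_atTop he
  refine hdir d₀ hd.mapClusterPt (mem_span_singleton_of_tendsto_ofReal_mul_add
    (c := fun i => a i / (b i * ‖w i‖)) (hue.congr' ?_) hv hv₀ hd)
  filter_upwards [hb, hw.eventually_gt_atTop 0] with i hbi hwi
  have : (b i : ℂ) ≠ 0 := by exact_mod_cast hbi
  have : (‖w i‖ : ℂ) ≠ 0 := by exact_mod_cast hwi.ne'
  simp only [e, d]
  push_cast
  field_simp

theorem mem_zmultiples_of_mapClusterPt {α : Type*} {F : Filter α} {v w u : α → ℂ} {v₀ x : ℂ}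
    (hv : Tendsto v F (𝓝 v₀)) (hv₀ : v₀ ≠ 0) (hw : Tendsto (fun i => ‖w i‖) F atTop)
    (hdir : ∀ d₀ : ℂ, MapClusterPt d₀ F (fun i => w i / (‖w i‖ : ℂ)) →
      d₀ ∉ Submodule.span ℝ ({v₀} : Set ℂ))
    (hu : ∀ i, u i ∈ AddSubgroup.zmultiples (v i) ⊔ AddSubgroup.zmultiples (w i))
    (hx : MapClusterPt x F u) :
    x ∈ AddSubgroup.zmultiples v₀ := by
  obtain ⟨U, hUF, hUx⟩ := mapClusterPt_iff_ultrafilter.mp hx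
  have hcoeff : ∀ i, ∃ a b : ℤ, (a : ℂ) * v i + (b : ℂ) * w i = u i := fun i => by
    obtain ⟨_, ⟨a, rfl⟩, _, ⟨b, rfl⟩, hab⟩ := AddSubgroup.mem_sup.mp (hu i)
    exact ⟨a, b, by simpa only [zsmul_eq_mul] using hab⟩
  choose a b hab using hcoeff
  have hvU := hv.mono_left hUF
  have hb := eventually_eq_zero_of_tendsto_intCast_mul_add U (hUx.congr fun i => (hab i).symm)
    hvU hv₀ (hw.mono_left hUF) fun d₀ hd₀ => hdir d₀ (hd₀.mono hUF)
  refine mem_zmultiples_of_tendsto_intCast_mul (a := a) (hUx.congr' ?_) hvU hv₀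
  filter_upwards [hb] with i hi
  rw [← hab i, hi, Int.cast_zero, zero_mul, add_zero]

theorem stmt11_general (v w : ℕ → ℂ) (v₀ : ℂ)
    (hv : Filter.Tendsto v Filter.atTop (nhds v₀)) (hv₀ : v₀ ≠ 0)
    (hw : Filter.Tendsto (fun n => ‖w n‖) Filter.atTop Filter.atTop)
    (hdir : ∀ u : ℂ, MapClusterPt u Filter.atTop (fun n => w n / (‖w n‖ : ℂ)) →
      u ∉ Submodule.span ℝ ({v₀} : Set ℂ)) :
    ChabConvSeq
      (fun n => ((AddSubgroup.zmultiples (v n) ⊔ AddSubgroup.zmultiples (w n)) : Set ℂ))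
      ((AddSubgroup.zmultiples v₀ : AddSubgroup ℂ) : Set ℂ) := by
  refine ⟨fun h hh => ?_, fun u hu x hx => ?_⟩
  · obtain ⟨k, rfl⟩ := AddSubgroup.mem_zmultiples_iff.mp hh
    exact ⟨fun n => k • v n, fun n => Or.inl (AddSubgroup.zsmul_mem_zmultiples _ _),
      hv.const_smul k⟩
  · exact mem_zmultiples_of_mapClusterPt hv hv₀ hw hdir
      (fun n => (hu n).elim AddSubgroup.mem_sup_left AddSubgroup.mem_sup_right) hx

/-- If a sequence of lattices `Λ n = ℤ v n ⊕ ℤ w n` in `ℂ` satisfies `v n → v ≠ 0` and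
`‖w n‖ → ∞`, with the directions `w n / ‖w n‖` having no accumulation point on the real
line `ℝ v` (which would force degeneracy), then `Λ n` converges in the Chabauty topology
to the closed subgroup `ℤ v`. -/
theorem stmt11 (v w : ℕ → ℂ) (v₀ : ℂ)
    (hlat : ∀ n, LinearIndependent ℝ ![v n, w n])
    (hv : Filter.Tendsto v Filter.atTop (nhds v₀)) (hv₀ : v₀ ≠ 0)
    (hw : Filter.Tendsto (fun n => ‖w n‖) Filter.atTop Filter.atTop)
    (hdir : ∀ u : ℂ, MapClusterPt u Filter.atTop (fun n => w n / (‖w n‖ : ℂ)) →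
      u ∉ Submodule.span ℝ ({v₀} : Set ℂ)) :
    ChabConvSeq
      (fun n => ((AddSubgroup.zmultiples (v n) ⊔ AddSubgroup.zmultiples (w n)) : Set ℂ))
      ((AddSubgroup.zmultiples v₀ : AddSubgroup ℂ) : Set ℂ) :=
  stmt11_general v w v₀ hv hv₀ hw hdir
end

section
/- A sequence of cyclic groups generated by loxodromic elements g_n ∈ PSL(2,ℂ) whose two fixed points p_n, q_n both converge to the same point p ∈ ℂP¹, and whose multipliers λ_n → 1, can converge in the Chabauty topology to a group of parabolic elements fixing p. -/
open Matrix Complex Filter Topology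
noncomputable section

/-- `SL(2,ℂ)`. -/
abbrev SL2 := Matrix.SpecialLinearGroup (Fin 2) ℂ

instance : TopologicalSpace SL2 := instTopologicalSpaceSubtype

/-- `PSL(2,ℂ)`, as the quotient of `SL(2,ℂ)` by its center `{±I}`. -/
abbrev PSL2 := SL2 ⧸ Subgroup.center SL2

/-- The Möbius transformation of the Riemann sphere `ℂP¹ = OnePoint ℂ`
associated to a matrix in `SL(2,ℂ)`. -/
noncomputable def mob (A : SL2) (x : OnePoint ℂ) : OnePoint ℂ :=
  Option.elim x
    (if A.1 1 0 = 0 then OnePoint.infty else ((A.1 0 0 / A.1 1 0 : ℂ) : OnePoint ℂ))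
    (fun z => if A.1 1 0 * z + A.1 1 1 = 0 then OnePoint.infty
      else (((A.1 0 0 * z + A.1 0 1) / (A.1 1 0 * z + A.1 1 1) : ℂ) : OnePoint ℂ))

/-- `g ∈ PSL(2,ℂ)` fixes the point `x ∈ ℂP¹` (well defined since the center acts
trivially projectively: we require every lift to fix `x`). -/
def Fixes (g : PSL2) (x : OnePoint ℂ) : Prop :=
  ∀ A : SL2, (QuotientGroup.mk A : PSL2) = g → mob A x = x

/-- An element of `PSL(2,ℂ)` is parabolic if it is non-identity and has a unique
fixed point on the Riemann sphere. -/
def IsParabolic (g : PSL2) : Prop := g ≠ 1 ∧ ∃! x, Fixes g x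

/-- The translation `z ↦ z + b` as an element of `PSL(2,ℂ)`. -/
def Tr (b : ℂ) : PSL2 := QuotientGroup.mk ⟨!![1, b; 0, 1], by simp [Matrix.det_fin_two_of]⟩

/-- The diagonal element acting as `z ↦ e^t z`. -/
def Dg (t : ℂ) : PSL2 := QuotientGroup.mk ⟨!![Complex.exp (t/2), 0; 0, Complex.exp (-(t/2))],
  by simp [Matrix.det_fin_two_of, ← Complex.exp_add]⟩

/-- The involution `z ↦ 1/z` as an element of `PSL(2,ℂ)`. -/
def iotaP : PSL2 := QuotientGroup.mk ⟨!![0, Complex.I; Complex.I, 0],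
  by simp [Matrix.det_fin_two_of, Complex.I_mul_I]⟩

/-- The involution `z ↦ -z` as an element of `PSL(2,ℂ)`. -/
def negP : PSL2 := QuotientGroup.mk ⟨!![Complex.I, 0; 0, -Complex.I],
  by simp [Matrix.det_fin_two_of, Complex.I_mul_I]⟩

/-- The full diagonal group `{z ↦ a z : a ∈ ℂ*}` of `PSL(2,ℂ)` (as a set, the range of `Dg`
since `exp : ℂ → ℂ*` is onto). -/
def Dset : Set PSL2 := Set.range Dg

/-- The full translation group `{z ↦ z + b : b ∈ ℂ}` of `PSL(2,ℂ)` (as a set). -/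
def Tset : Set PSL2 := Set.range Tr

/-!
The witness is `g n : z ↦ e^{-s} (z - 1/s) + 1/s` with `s = 1/(n+1)`: a loxodromic with fixed
points `1/s → ∞` and `∞`, and multiplier `e^{-s} → 1`. Its powers are
`g n ^ k : z ↦ e^{-ks} z + (1 - e^{-ks})/s`, which converge to the translation `z ↦ z + k`
since `(1 - e^{-ks})/s → k`. Conversely, the upper right entry of `g n ^ k` is
`(2/s) sinh (ks/2)`, of modulus at least `|k|` uniformly in `n`. As this modulus is well
defined and continuous on `PSL(2,ℂ)`, a cluster point of elements of the groups `⟨g n⟩` only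
sees boundedly many powers, each of which converges, so it is a translation by an integer.
-/

open scoped OnePoint

section Chabauty

variable {X ι : Type*} [TopologicalSpace X] [T2Space X] {f : ℕ → ι → X} {ℓ : ι → X}
  {θ : X → ℝ} {φ : ι → ℝ}

theorem exists_isOpen_eventually_disjoint_range {x : X} (hx : x ∉ Set.range ℓ)
    (hf : ∀ k, Tendsto (fun n => f n k) atTop (𝓝 (ℓ k))) (hθ : Continuous θ)
    (hφ : Tendsto φ cofinite atTop) (hθφ : ∀ n k, φ k ≤ θ (f n k)) :
    ∃ W, IsOpen W ∧ x ∈ W ∧ ∀ᶠ n in atTop, Disjoint W (Set.range (f n)) := by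
  have hsep : ∀ k, ∃ O, IsOpen O ∧ x ∈ O ∧ ∀ᶠ n in atTop, f n k ∉ O := fun k => by
    obtain ⟨O, V, hO, hV, hxO, hkV, hOV⟩ := t2_separation fun h => hx ⟨k, h.symm⟩
    exact ⟨O, hO, hxO, (hf k).eventually (hV.mem_nhds hkV) |>.mono
      fun n hn hnO => hOV.notMem_of_mem_left hnO hn⟩
  choose O hO hxO hfO using hsep
  set S := {k | φ k ≤ θ x + 1}
  have hS : S.Finite := by
    simpa [S, not_lt] using Filter.eventually_cofinite.mp (hφ.eventually_gt_atTop (θ x + 1))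
  refine ⟨θ ⁻¹' Set.Iio (θ x + 1) ∩ ⋂ k ∈ S, O k,
    (isOpen_Iio.preimage hθ).inter (hS.isOpen_biInter fun k _ => hO k),
    ⟨by simp, Set.mem_biInter fun k _ => hxO k⟩, ?_⟩
  filter_upwards [(eventually_all_finite hS).mpr fun k _ => hfO k] with n hn
  rw [Set.disjoint_right]
  rintro _ ⟨k, rfl⟩ ⟨hθk, hOk⟩
  by_cases hk : k ∈ S
  · exact hn k hk (Set.mem_iInter₂.mp hOk k hk)
  · exact hk ((hθφ n k).trans (le_of_lt hθk))

theorem chabConvSeq_closure_range (hf : ∀ k, Tendsto (fun n => f n k) atTop (𝓝 (ℓ k)))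
    (hθ : Continuous θ) (hφ : Tendsto φ cofinite atTop) (hθφ : ∀ n k, φ k ≤ θ (f n k)) :
    ChabConvSeq (fun n => closure (Set.range (f n))) (Set.range ℓ) := by
  refine ⟨?_, fun u hu x hx => ?_⟩
  · rintro _ ⟨k, rfl⟩
    exact ⟨fun n => f n k, fun n => subset_closure ⟨k, rfl⟩, hf k⟩
  by_contra hxℓ
  obtain ⟨W, hW, hxW, hdisj⟩ := exists_isOpen_eventually_disjoint_range hxℓ hf hθ hφ hθφ
  obtain ⟨n, hnW, hn⟩ :=
    ((mapClusterPt_iff_frequently.mp hx W (hW.mem_nhds hxW)).and_eventually hdisj).exists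
  exact (hn.closure_right hW).notMem_of_mem_left hnW (hu n)

end Chabauty

instance : IsTopologicalGroup SL2 := Matrix.SpecialLinearGroup.topologicalGroup

instance : T1Space SL2 := Matrix.SpecialLinearGroup.instT1Space

instance : IsClosed (Subgroup.center SL2 : Set SL2) := by
  rw [Subgroup.coe_center, ← Set.centralizer_univ]
  exact Set.isClosed_centralizer _

theorem Matrix.SpecialLinearGroup.eq_one_or_eq_neg_one_of_mem_center {R : Type*} [CommRing R]
    [NoZeroDivisors R] {A : SpecialLinearGroup (Fin 2) R} (hA : A ∈ Subgroup.center _) :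
    A = 1 ∨ A = -1 := by
  obtain ⟨r, hr, hrA⟩ := SpecialLinearGroup.mem_center_iff.mp hA
  rcases (by simpa using hr : r = 1 ∨ r = -1) with rfl | rfl
  · left; ext1; simp [← hrA]
  · right; ext1; rw [← hrA, map_neg, map_one]; simp

theorem eq_or_eq_neg_of_mk_eq_mk {A B : SL2}
    (h : (QuotientGroup.mk A : PSL2) = QuotientGroup.mk B) : B = A ∨ B = -A := by
  rcases Matrix.SpecialLinearGroup.eq_one_or_eq_neg_one_of_mem_center (QuotientGroup.eq.mp h)
    with h1 | h1
  · left; rw [inv_mul_eq_one] at h1; exact h1.symm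
  · right; rw [inv_mul_eq_iff_eq_mul, mul_neg_one] at h1; exact h1

theorem mob_neg (A : SL2) : mob (-A) = mob A := by
  ext (_ | z)
  · simp [mob, neg_div_neg_eq]
  · simp only [mob, Option.elim, SpecialLinearGroup.coe_neg, Matrix.neg_apply, neg_mul,
      ← neg_add, neg_eq_zero, neg_div_neg_eq]

theorem fixes_mk_iff {A : SL2} {x : OnePoint ℂ} :
    Fixes (QuotientGroup.mk A) x ↔ mob A x = x := by
  refine ⟨fun h => h A rfl, fun h B hB => ?_⟩
  rcases eq_or_eq_neg_of_mk_eq_mk hB.symm with rfl | rfl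
  · exact h
  · rwa [mob_neg]

def upperRightNorm (g : PSL2) : ℝ :=
  Quotient.liftOn' g (fun A : SL2 => ‖A.1 0 1‖) fun A B h => by
    rcases eq_or_eq_neg_of_mk_eq_mk (Quotient.sound' h) with rfl | rfl <;> simp

theorem upperRightNorm_mk (A : SL2) : upperRightNorm (QuotientGroup.mk A) = ‖A.1 0 1‖ := rfl

theorem continuous_upperRightNorm : Continuous upperRightNorm :=
  Continuous.quotient_liftOn' (by fun_prop) _

theorem mob_coe (A : SL2) (z : ℂ) : mob A z =
    if A.1 1 0 * z + A.1 1 1 = 0 then ∞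
    else ↑((A.1 0 0 * z + A.1 0 1) / (A.1 1 0 * z + A.1 1 1)) := rfl

theorem mob_infty (A : SL2) : mob A ∞ = if A.1 1 0 = 0 then ∞ else ↑(A.1 0 0 / A.1 1 0) := rfl

def transSL (b : ℂ) : SL2 := ⟨!![1, b; 0, 1], by simp [Matrix.det_fin_two_of]⟩

def diagSL (t : ℂ) : SL2 := ⟨!![exp (t / 2), 0; 0, exp (-(t / 2))],
  by simp [Matrix.det_fin_two_of, ← Complex.exp_add]⟩

def loxSL (t q : ℂ) : SL2 :=
  ⟨!![exp (t / 2), q * (exp (-(t / 2)) - exp (t / 2)); 0, exp (-(t / 2))],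
    by simp [Matrix.det_fin_two_of, ← Complex.exp_add]⟩

@[simp] theorem transSL_val (b : ℂ) : (transSL b).1 = !![1, b; 0, 1] := rfl
@[simp] theorem diagSL_val (t : ℂ) : (diagSL t).1 = !![exp (t / 2), 0; 0, exp (-(t / 2))] := rfl
@[simp] theorem loxSL_val (t q : ℂ) : (loxSL t q).1 =
    !![exp (t / 2), q * (exp (-(t / 2)) - exp (t / 2)); 0, exp (-(t / 2))] := rfl

theorem Tr_eq_mk (b : ℂ) : Tr b = QuotientGroup.mk (transSL b) := rfl

theorem Dg_eq_mk (t : ℂ) : Dg t = QuotientGroup.mk (diagSL t) := rfl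

def trAddChar : AddChar ℂ PSL2 where
  toFun := Tr
  map_zero_eq_one' := by
    rw [Tr_eq_mk, ← QuotientGroup.mk_one]; congr 1; ext i j; fin_cases i <;> fin_cases j <;> rfl
  map_add_eq_mul' a b := by
    rw [Tr_eq_mk, Tr_eq_mk, Tr_eq_mk, ← QuotientGroup.mk_mul]; congr 1; ext i j
    fin_cases i <;> fin_cases j <;>
      simp [Matrix.SpecialLinearGroup.coe_mul, add_comm]

def dgAddChar : AddChar ℂ PSL2 where
  toFun := Dg
  map_zero_eq_one' := by
    rw [Dg_eq_mk, ← QuotientGroup.mk_one]; congr 1; ext i j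
    fin_cases i <;> fin_cases j <;> simp
  map_add_eq_mul' a b := by
    rw [Dg_eq_mk, Dg_eq_mk, Dg_eq_mk, ← QuotientGroup.mk_mul]; congr 1; ext i j
    fin_cases i <;> fin_cases j <;>
      simp [Matrix.SpecialLinearGroup.coe_mul, ← Complex.exp_add] <;>
      ring_nf

theorem Tr_neg (b : ℂ) : Tr (-b) = (Tr b)⁻¹ := trAddChar.map_neg_eq_inv b

theorem Tr_intCast_mul (k : ℤ) (b : ℂ) : Tr (k * b) = Tr b ^ k := by
  rw [← zsmul_eq_mul]; exact trAddChar.map_zsmul_eq_zpow k b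

theorem Dg_intCast_mul (k : ℤ) (t : ℂ) : Dg (k * t) = Dg t ^ k := by
  rw [← zsmul_eq_mul]; exact dgAddChar.map_zsmul_eq_zpow k t

theorem Tr_mul_Dg_mul_Tr_inv (t q : ℂ) :
    Tr q * Dg t * (Tr q)⁻¹ = QuotientGroup.mk (loxSL t q) := by
  rw [← Tr_neg, Tr_eq_mk, Tr_eq_mk, Dg_eq_mk, ← QuotientGroup.mk_mul, ← QuotientGroup.mk_mul]
  congr 1; ext i j
  fin_cases i <;> fin_cases j <;>
    simp [Matrix.SpecialLinearGroup.coe_mul]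
  ring

theorem mk_loxSL_zpow (t q : ℂ) (k : ℤ) :
    (QuotientGroup.mk (loxSL t q) : PSL2) ^ k = QuotientGroup.mk (loxSL (k * t) q) := by
  rw [← Tr_mul_Dg_mul_Tr_inv, ← Tr_mul_Dg_mul_Tr_inv, conj_zpow, Dg_intCast_mul]

theorem mob_transSL_coe (b z : ℂ) : mob (transSL b) z = ↑(z + b) := by
  simp [mob_coe]

theorem mob_transSL_infty (b : ℂ) : mob (transSL b) ∞ = ∞ := by
  simp [mob_infty]

theorem mob_loxSL_infty (t q : ℂ) : mob (loxSL t q) ∞ = ∞ := by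
  simp [mob_infty]

theorem mob_loxSL_coe_self (t q : ℂ) : mob (loxSL t q) q = q := by
  simp only [mob_coe, loxSL_val, of_apply, cons_val', cons_val_zero, cons_val_one,
    cons_val_fin_one, zero_mul, zero_add, exp_ne_zero, ↓reduceIte, OnePoint.some_eq_iff]
  rw [div_eq_iff (Complex.exp_ne_zero _)]
  ring

theorem upperRightNorm_Tr (b : ℂ) : upperRightNorm (Tr b) = ‖b‖ := rfl

theorem Tr_ne_one {b : ℂ} (hb : b ≠ 0) : Tr b ≠ 1 := by
  intro h
  have := upperRightNorm_Tr b
  rw [h, ← QuotientGroup.mk_one, upperRightNorm_mk] at this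
  exact hb (norm_eq_zero.mp (by simpa using this.symm))

theorem fixes_Tr_infty (b : ℂ) : Fixes (Tr b) ∞ := fixes_mk_iff.mpr (mob_transSL_infty b)

theorem isParabolic_Tr {b : ℂ} (hb : b ≠ 0) : IsParabolic (Tr b) := by
  refine ⟨Tr_ne_one hb, ∞, fixes_Tr_infty b, fun x hx => ?_⟩
  induction x using OnePoint.rec with
  | infty => rfl
  | coe z =>
    rw [Tr_eq_mk, fixes_mk_iff, mob_transSL_coe] at hx
    exact absurd (by simpa using hx) hb

theorem Real.two_mul_abs_le_abs_exp_sub_exp_neg (x : ℝ) :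
    2 * |x| ≤ |Real.exp x - Real.exp (-x)| := by
  have h : Real.exp x - Real.exp (-x) = 2 * Real.sinh x := by rw [Real.sinh_eq]; ring
  rw [h, abs_mul, abs_two, Real.abs_sinh]
  gcongr
  exact Real.self_le_sinh_iff.mpr (abs_nonneg x)

theorem abs_mul_le_norm_loxSL_apply (t q : ℝ) : |q * t| ≤ ‖(loxSL t q).1 0 1‖ := by
  have h := Real.two_mul_abs_le_abs_exp_sub_exp_neg (-(t / 2))
  rw [neg_neg, abs_neg, abs_div, abs_two, mul_div_cancel₀ _ two_ne_zero] at h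
  have he : (loxSL t q).1 0 1 = ((q * (Real.exp (-(t / 2)) - Real.exp (t / 2)) : ℝ) : ℂ) := by
    simp
  rw [he, Complex.norm_real, Real.norm_eq_abs, abs_mul, abs_mul]
  gcongr

theorem tendsto_loxSL_zpow (k : ℤ) :
    Tendsto (fun s : ℂ => loxSL (k * -s) s⁻¹) (𝓝[≠] 0) (𝓝 (transSL k)) := by
  refine tendsto_subtype_rng.mpr ?_
  simp only [loxSL_val, transSL_val]
  have hdiag : ∀ c : ℂ, Tendsto (fun s : ℂ => cexp (c * s)) (𝓝[≠] 0) (𝓝 1) := fun c =>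
    ((by fun_prop : Continuous fun s : ℂ => cexp (c * s)).tendsto' 0 1 (by simp)).mono_left
      nhdsWithin_le_nhds
  have hderiv : HasDerivAt (fun w : ℂ => cexp (k * w / 2) - cexp (-(k * w / 2))) k 0 := by
    have h : HasDerivAt (fun w : ℂ => k * w / 2) (k / 2) 0 := by
      simpa using ((hasDerivAt_id' (0 : ℂ)).const_mul (k : ℂ)).div_const 2
    exact (h.cexp.sub h.neg.cexp).congr_deriv (by simp)
  refine tendsto_pi_nhds.2 fun i => tendsto_pi_nhds.2 fun j => ?_
  fin_cases i <;> fin_cases j <;>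
    simp only [Fin.zero_eta, Fin.mk_one, Fin.isValue, of_apply, cons_val', cons_val_zero,
      cons_val_one, cons_val_fin_one]
  · simpa [mul_comm, mul_div_assoc, neg_div] using hdiag (-k / 2)
  · refine hderiv.tendsto_slope_zero.congr fun s => ?_
    simp [neg_div]
  · exact tendsto_const_nhds
  · simpa [mul_comm, mul_div_assoc, neg_div] using hdiag (k / 2)

theorem eq_one_or_isParabolic_of_mem_zpowers_Tr {b : ℂ} (hb : b ≠ 0) :
    ∀ h ∈ Subgroup.zpowers (Tr b), h = 1 ∨ (IsParabolic h ∧ Fixes h ∞) := by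
  rintro _ ⟨k, rfl⟩
  dsimp only
  rcases eq_or_ne k 0 with rfl | hk
  · exact .inl (zpow_zero _)
  · rw [← Tr_intCast_mul]
    exact .inr ⟨isParabolic_Tr (mul_ne_zero (by exact_mod_cast hk) hb), fixes_Tr_infty _⟩

theorem chabConvSeq_zpowers_loxSL {s : ℕ → ℝ} (hs0 : ∀ n, s n ≠ 0)
    (hs : Tendsto (fun n => (s n : ℂ)) atTop (𝓝[≠] 0)) :
    ChabConvSeq
      (fun n => closure ((Subgroup.zpowers (QuotientGroup.mk (loxSL (-s n) (s n)⁻¹) : PSL2)) :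
        Set PSL2))
      (Subgroup.zpowers (Tr 1) : Set PSL2) := by
  simp only [Subgroup.coe_zpowers, mk_loxSL_zpow, ← Tr_intCast_mul, mul_one]
  refine chabConvSeq_closure_range (fun k => ?_) continuous_upperRightNorm
    (φ := fun k : ℤ => ‖k‖) ?_ fun n k => ?_
  · exact (continuous_quotient_mk'.tendsto _).comp ((tendsto_loxSL_zpow k).comp hs)
  · simpa [cocompact_eq_cofinite] using tendsto_norm_cocompact_atTop (E := ℤ)
  · have h := abs_mul_le_norm_loxSL_apply (k * -s n) (s n)⁻¹
    rw [upperRightNorm_mk]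
    push_cast at h
    convert h using 1
    field_simp [hs0 n]
    rw [abs_neg, Int.norm_eq_abs]

/-- A sequence of cyclic groups generated by loxodromic elements `g n ∈ PSL(2,ℂ)` whose two
fixed points both converge to the same point `p ∈ ℂP¹`, and whose multipliers `λ n → 1`,
can converge in the Chabauty topology to a nontrivial group of parabolic elements
fixing `p`. -/
theorem stmt13 : ∃ (g : ℕ → PSL2) (p : OnePoint ℂ) (pf qf : ℕ → OnePoint ℂ)
    (lam : ℕ → ℂ) (L : Subgroup PSL2),
    (∀ n, ∃ (h : PSL2) (τ : ℂ), Complex.exp τ = lam n ∧ ‖lam n‖ ≠ 1 ∧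
      g n = h * Dg τ * h⁻¹) ∧
    (∀ n, pf n ≠ qf n ∧ Fixes (g n) (pf n) ∧ Fixes (g n) (qf n)) ∧
    Filter.Tendsto pf Filter.atTop (nhds p) ∧
    Filter.Tendsto qf Filter.atTop (nhds p) ∧
    Filter.Tendsto lam Filter.atTop (nhds (1 : ℂ)) ∧
    ChabConvSeq (fun n => closure ((Subgroup.zpowers (g n) : Subgroup PSL2) : Set PSL2))
      (L : Set PSL2) ∧
    L ≠ ⊥ ∧
    (∀ h ∈ L, h = 1 ∨ (IsParabolic h ∧ Fixes h p)) := by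
  set s : ℕ → ℝ := fun n => 1 / ((n : ℝ) + 1)
  have hs0 : ∀ n, s n ≠ 0 := fun n => by positivity
  have hs : Tendsto (fun n => (s n : ℂ)) atTop (𝓝[≠] 0) := by
    refine tendsto_nhdsWithin_iff.mpr ⟨?_, .of_forall fun n => by simpa using hs0 n⟩
    simpa [s, Function.comp_def] using (Complex.continuous_ofReal.tendsto 0).comp
      tendsto_one_div_add_atTop_nhds_zero_nat
  refine ⟨fun n => QuotientGroup.mk (loxSL (-s n) (s n)⁻¹), ∞, fun _ => ∞,
    fun n => ((s n : ℂ)⁻¹ : ℂ), fun n => exp (-s n), Subgroup.zpowers (Tr 1),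
    fun n => ⟨Tr (s n)⁻¹, -s n, rfl, ?_, (Tr_mul_Dg_mul_Tr_inv _ _).symm⟩,
    fun n => ⟨OnePoint.infty_ne_coe _, fixes_mk_iff.mpr (mob_loxSL_infty _ _),
      fixes_mk_iff.mpr (mob_loxSL_coe_self _ _)⟩,
    tendsto_const_nhds, ?_, ?_, chabConvSeq_zpowers_loxSL hs0 hs,
    Subgroup.zpowers_ne_bot.mpr (Tr_ne_one one_ne_zero),
    eq_one_or_isParabolic_of_mem_zpowers_Tr one_ne_zero⟩
  · simpa [Complex.norm_exp] using hs0 n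
  · refine OnePoint.tendsto_coe_infty.comp ?_
    rw [coclosedCompact_eq_cocompact, ← Metric.cobounded_eq_cocompact]
    exact tendsto_inv₀_nhdsNE_zero.comp hs
  · simpa [Function.comp_def] using ((continuous_exp.comp continuous_neg).tendsto 0).comp
      (tendsto_nhdsWithin_iff.mp hs).1
end
end

section
/- Every maximal abelian subgroup of PSL(2,ℂ) is conjugate to one of: the full diagonal group { z ↦ a z : a ∈ ℂ* }, the full translation group { z ↦ z + b : b ∈ ℂ }, or the Klein four-group { id, z ↦ −z, z ↦ 1/z, z ↦ −1/z }. -/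
open Matrix Complex Filter Topology
noncomputable section

/-!
Every element of `PSL(2,ℂ)` is conjugate to a diagonal one or to the translation `z ↦ z + 1`
(triangularize along an eigenvector, then diagonalize unless the eigenvalue is repeated).
The centralizer of `z ↦ z + 1` is the translation group, and that of a diagonal element other
than `1` and `z ↦ -z` is the diagonal group; both groups are abelian. So an abelian subgroup
containing an element of one of these kinds is conjugate into the corresponding group.
Otherwise a nontrivial element is conjugate to `z ↦ -z`, whose centralizer consists of the
diagonal and antidiagonal elements: either the whole subgroup is then diagonal, or one of its
elements is antidiagonal and a diagonal conjugation turns it into `z ↦ 1/z` while fixing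
`z ↦ -z`, and the common centralizer of these two involutions is the Klein four-group.
For a maximal abelian subgroup each of these inclusions is an equality.
-/

theorem image_conj_eq_of_maximal_abelian {G : Type*} [Group G] {H K : Subgroup G}
    (hmax : ∀ K : Subgroup G, (∀ a ∈ K, ∀ b ∈ K, a * b = b * a) → H ≤ K → K = H)
    (hK : ∀ a ∈ K, ∀ b ∈ K, a * b = b * a) {c : G} (hc : Set.MapsTo (MulAut.conj c) H K) :
    (fun g => c * g * c⁻¹) '' (H : Set G) = K := by
  have hcomap : K.comap (MulAut.conj c).toMonoidHom = H := by
    refine hmax _ (fun a ha b hb => (MulAut.conj c).injective ?_) hc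
    simpa only [map_mul, MulEquiv.coe_toMonoidHom] using hK _ ha _ hb
  calc (fun g => c * g * c⁻¹) '' (H : Set G) = MulAut.conj c '' (MulAut.conj c ⁻¹' K) := by
        rw [← hcomap]; rfl
    _ = K := Set.image_preimage_eq _ (MulAut.conj c).surjective

theorem MulAut.conj_eq_of_mul_eq {G : Type*} [Group G] {P A B : G} (h : P * A = B * P) :
    MulAut.conj P A = B := by
  rw [MulAut.conj_apply, h, mul_inv_cancel_right]

abbrev toPSL : SL2 →* PSL2 := QuotientGroup.mk' _

theorem mem_center_SL2_iff {A : SL2} : A ∈ Subgroup.center SL2 ↔ A = 1 ∨ A = -1 := by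
  have hneg : ((-1 : SL2) : Matrix (Fin 2) (Fin 2) ℂ) = scalar (Fin 2) (-1) := by
    rw [Matrix.SpecialLinearGroup.coe_neg]
    simp [Matrix.scalar_apply, ← Matrix.diagonal_one, Matrix.diagonal_neg]
  rw [Matrix.SpecialLinearGroup.mem_center_iff]
  constructor
  · rintro ⟨r, hr, hA⟩
    rcases mul_self_eq_one_iff.mp (by simpa [sq] using hr) with rfl | rfl
    · exact Or.inl (Subtype.ext (by simp [← hA]))
    · exact Or.inr (Subtype.ext (by rw [← hA, hneg]))
  · rintro (rfl | rfl)
    · exact ⟨1, by simp, by simp⟩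
    · exact ⟨-1, by simp, hneg.symm⟩

theorem toPSL_eq_toPSL_iff {A B : SL2} : toPSL A = toPSL B ↔ A = B ∨ A = -B := by
  rw [QuotientGroup.mk'_apply, QuotientGroup.mk'_apply, QuotientGroup.eq, mem_center_SL2_iff,
    inv_mul_eq_one, inv_mul_eq_iff_eq_mul, mul_neg_one]
  exact or_congr_right (eq_comm.trans neg_eq_iff_eq_neg)

def mkSL2 (a b c d : ℂ) (h : a * d - b * c = 1) : SL2 :=
  ⟨!![a, b; c, d], by simpa [Matrix.det_fin_two_of] using h⟩

section mkSL2

variable {a b c d a' b' c' d' : ℂ} {h : a * d - b * c = 1} {h' : a' * d' - b' * c' = 1}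

@[simp]
theorem coe_mkSL2 : (mkSL2 a b c d h : Matrix (Fin 2) (Fin 2) ℂ) = !![a, b; c, d] := rfl

theorem mkSL2_eq_iff :
    mkSL2 a b c d h = mkSL2 a' b' c' d' h' ↔ a = a' ∧ b = b' ∧ c = c' ∧ d = d' := by
  refine Subtype.ext_iff.trans ⟨fun he => ?_, ?_⟩
  · exact ⟨by simpa using congr_fun₂ he 0 0, by simpa using congr_fun₂ he 0 1,
      by simpa using congr_fun₂ he 1 0, by simpa using congr_fun₂ he 1 1⟩
  · rintro ⟨rfl, rfl, rfl, rfl⟩; rfl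

theorem mkSL2_mul : mkSL2 a b c d h * mkSL2 a' b' c' d' h' =
    mkSL2 (a * a' + b * c') (a * b' + b * d') (c * a' + d * c') (c * b' + d * d')
      (by linear_combination (a' * d' - b' * c') * h + h') := by
  apply Subtype.ext; rw [Matrix.SpecialLinearGroup.coe_mul]; simp

theorem neg_mkSL2 : -mkSL2 a b c d h = mkSL2 (-a) (-b) (-c) (-d) (by linear_combination h) := by
  apply Subtype.ext; rw [Matrix.SpecialLinearGroup.coe_neg]; simp

theorem one_eq_mkSL2 : (1 : SL2) = mkSL2 1 0 0 1 (by ring) := by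
  apply Subtype.ext; simp [Matrix.one_fin_two]

theorem exists_eq_mkSL2 (A : SL2) : ∃ a b c d h, A = mkSL2 a b c d h :=
  ⟨_, _, _, _, (Matrix.det_fin_two A.1).symm.trans A.2, Subtype.ext (Matrix.eta_fin_two A.1)⟩

theorem toPSL_mkSL2_eq_iff : toPSL (mkSL2 a b c d h) = toPSL (mkSL2 a' b' c' d' h') ↔
    (a = a' ∧ b = b' ∧ c = c' ∧ d = d') ∨
      (a = -a' ∧ b = -b' ∧ c = -c' ∧ d = -d') := by
  rw [toPSL_eq_toPSL_iff, neg_mkSL2, mkSL2_eq_iff, mkSL2_eq_iff]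

theorem toPSL_mkSL2_mul : toPSL (mkSL2 a b c d h) * toPSL (mkSL2 a' b' c' d' h') =
    toPSL (mkSL2 (a * a' + b * c') (a * b' + b * d') (c * a' + d * c') (c * b' + d * d')
      (by linear_combination (a' * d' - b' * c') * h + h')) := by
  rw [← map_mul, mkSL2_mul]

theorem commute_toPSL_mkSL2_iff :
    Commute (toPSL (mkSL2 a b c d h)) (toPSL (mkSL2 a' b' c' d' h')) ↔
      (a * a' + b * c' = a' * a + b' * c ∧ a * b' + b * d' = a' * b + b' * d ∧
        c * a' + d * c' = c' * a + d' * c ∧ c * b' + d * d' = c' * b + d' * d) ∨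
      (a * a' + b * c' = -(a' * a + b' * c) ∧ a * b' + b * d' = -(a' * b + b' * d) ∧
        c * a' + d * c' = -(c' * a + d' * c) ∧ c * b' + d * d' = -(c' * b + d' * d)) := by
  rw [Commute, SemiconjBy, toPSL_mkSL2_mul, toPSL_mkSL2_mul, toPSL_mkSL2_eq_iff]

end mkSL2

theorem toPSL_mkSL2_one : toPSL (mkSL2 1 0 0 1 (by ring)) = 1 := by
  rw [← one_eq_mkSL2, map_one]

theorem conj_toPSL_eq_of_mul_eq {P A B : SL2} (h : P * A = B * P) :
    MulAut.conj (toPSL P) (toPSL A) = toPSL B :=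
  MulAut.conj_eq_of_mul_eq (by rw [← map_mul, h, map_mul])

theorem Tr_eq_toPSL (b : ℂ) : Tr b = toPSL (mkSL2 1 b 0 1 (by ring)) := rfl

theorem Dg_eq_toPSL (t : ℂ) : Dg t = toPSL (mkSL2 (exp (t / 2)) 0 0 (exp (-(t / 2)))
    (by rw [← exp_add]; simp)) := rfl

theorem negP_eq_toPSL : negP = toPSL (mkSL2 I 0 0 (-I) (by simp)) := rfl

theorem iotaP_eq_toPSL : iotaP = toPSL (mkSL2 0 I I 0 (by simp)) := rfl

theorem Tr_add (s t : ℂ) : Tr s * Tr t = Tr (s + t) := by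
  rw [Tr_eq_toPSL, Tr_eq_toPSL, Tr_eq_toPSL, toPSL_mkSL2_mul, toPSL_mkSL2_eq_iff]
  exact Or.inl ⟨by ring, by ring, by ring, by ring⟩

theorem Tr_zero : Tr 0 = 1 := toPSL_mkSL2_one

theorem Dg_add (s t : ℂ) : Dg s * Dg t = Dg (s + t) := by
  rw [Dg_eq_toPSL, Dg_eq_toPSL, Dg_eq_toPSL, toPSL_mkSL2_mul, toPSL_mkSL2_eq_iff]
  refine Or.inl ⟨?_, by ring, by ring, ?_⟩ <;> rw [← exp_add] <;> ring_nf

theorem Dg_zero : Dg 0 = 1 := by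
  rw [Dg_eq_toPSL, ← toPSL_mkSL2_one, toPSL_mkSL2_eq_iff]
  simp

def DG : Subgroup PSL2 where
  carrier := Dset
  one_mem' := ⟨0, Dg_zero⟩
  mul_mem' := by rintro _ _ ⟨s, rfl⟩ ⟨t, rfl⟩; exact ⟨s + t, (Dg_add s t).symm⟩
  inv_mem' := by
    rintro _ ⟨s, rfl⟩
    exact ⟨-s, (inv_eq_of_mul_eq_one_right (by rw [Dg_add, add_neg_cancel, Dg_zero])).symm⟩

def TG : Subgroup PSL2 where
  carrier := Tset
  one_mem' := ⟨0, Tr_zero⟩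
  mul_mem' := by rintro _ _ ⟨s, rfl⟩ ⟨t, rfl⟩; exact ⟨s + t, (Tr_add s t).symm⟩
  inv_mem' := by
    rintro _ ⟨s, rfl⟩
    exact ⟨-s, (inv_eq_of_mul_eq_one_right (by rw [Tr_add, add_neg_cancel, Tr_zero])).symm⟩

theorem DG_comm : ∀ a ∈ DG, ∀ b ∈ DG, a * b = b * a := by
  rintro _ ⟨s, rfl⟩ _ ⟨t, rfl⟩
  rw [Dg_add, Dg_add, add_comm]

theorem TG_comm : ∀ a ∈ TG, ∀ b ∈ TG, a * b = b * a := by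
  rintro _ ⟨s, rfl⟩ _ ⟨t, rfl⟩
  rw [Tr_add, Tr_add, add_comm]

theorem toPSL_diag_mem_DG {a d : ℂ} (h : a * d - 0 * 0 = 1) : toPSL (mkSL2 a 0 0 d h) ∈ DG := by
  have ha : a ≠ 0 := left_ne_zero_of_mul_eq_one (by simpa using h)
  refine ⟨2 * log a, ?_⟩
  rw [Dg_eq_toPSL, toPSL_mkSL2_eq_iff]
  refine Or.inl ⟨?_, rfl, rfl, ?_⟩
  · rw [mul_div_cancel_left₀ _ two_ne_zero, exp_log ha]
  · rw [mul_div_cancel_left₀ _ two_ne_zero, exp_neg, exp_log ha]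
    exact inv_eq_of_mul_eq_one_right (by simpa using h)

theorem exists_eq_toPSL_mkSL2 (g : PSL2) : ∃ a b c d h, g = toPSL (mkSL2 a b c d h) := by
  obtain ⟨A, rfl⟩ := QuotientGroup.mk'_surjective _ g
  obtain ⟨a, b, c, d, h, rfl⟩ := exists_eq_mkSL2 A
  exact ⟨a, b, c, d, h, rfl⟩

theorem mem_TG_of_commute_Tr_one {g : PSL2} (hg : Commute g (Tr 1)) : g ∈ TG := by
  obtain ⟨x, y, z, w, hX, rfl⟩ := exists_eq_toPSL_mkSL2 g
  rw [Tr_eq_toPSL, commute_toPSL_mkSL2_iff] at hg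
  rcases hg with ⟨h1, h2, -, -⟩ | ⟨h1, -, h3, h4⟩
  · have hz : z = 0 := by linear_combination -h1
    have hw : w = x := by linear_combination -h2
    have hx : x * x = 1 := by linear_combination hX + x * h2 - y * h1
    rcases mul_self_eq_one_iff.mp hx with rfl | rfl
    · refine ⟨y, ?_⟩
      rw [Tr_eq_toPSL, toPSL_mkSL2_eq_iff]
      exact Or.inl ⟨rfl, rfl, hz.symm, hw.symm⟩
    · refine ⟨-y, ?_⟩
      rw [Tr_eq_toPSL, toPSL_mkSL2_eq_iff]
      exact Or.inr ⟨by norm_num, by ring, by simp [hz], by simp [hw]⟩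
  · have hz : z = 0 := by linear_combination h3 / 2
    have hx : x = 0 := by linear_combination h1 / 2 - h3 / 4
    have hw : w = 0 := by linear_combination h4 / 2 - h3 / 4
    simp [hx, hz] at hX

theorem diag_or_antidiag_of_commute_diag {x y z w a d : ℂ} {hX : x * w - y * z = 1}
    {hD : a * d - 0 * 0 = 1} (had : a ≠ d)
    (hc : Commute (toPSL (mkSL2 x y z w hX)) (toPSL (mkSL2 a 0 0 d hD))) :
    (y = 0 ∧ z = 0) ∨ (x = 0 ∧ w = 0 ∧ a = -d) := by
  have ha : a ≠ 0 := left_ne_zero_of_mul_eq_one (by simpa using hD)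
  have hd : d ≠ 0 := right_ne_zero_of_mul_eq_one (by simpa using hD)
  rw [commute_toPSL_mkSL2_iff] at hc
  rcases hc with ⟨-, h2, h3, -⟩ | ⟨h1, h2, -, h4⟩
  · have hy : y * (d - a) = 0 := by linear_combination h2
    have hz : z * (a - d) = 0 := by linear_combination h3
    exact Or.inl ⟨(mul_eq_zero.mp hy).resolve_right (sub_ne_zero.mpr had.symm),
      (mul_eq_zero.mp hz).resolve_right (sub_ne_zero.mpr had)⟩
  · have hx : x * (2 * a) = 0 := by linear_combination h1
    have hw : w * (2 * d) = 0 := by linear_combination h4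
    obtain rfl := (mul_eq_zero.mp hx).resolve_right (mul_ne_zero two_ne_zero ha)
    obtain rfl := (mul_eq_zero.mp hw).resolve_right (mul_ne_zero two_ne_zero hd)
    have hy : y ≠ 0 := by rintro rfl; simp at hX
    have hy' : y * (a + d) = 0 := by linear_combination h2
    exact Or.inr ⟨rfl, rfl, eq_neg_of_add_eq_zero_left ((mul_eq_zero.mp hy').resolve_left hy)⟩

theorem mem_DG_of_commute_diag {g : PSL2} {a d : ℂ} {hD : a * d - 0 * 0 = 1} (had : a ≠ d)
    (had' : a ≠ -d) (hg : Commute g (toPSL (mkSL2 a 0 0 d hD))) : g ∈ DG := by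
  obtain ⟨x, y, z, w, hX, rfl⟩ := exists_eq_toPSL_mkSL2 g
  rcases diag_or_antidiag_of_commute_diag had hg with ⟨rfl, rfl⟩ | ⟨-, -, h⟩
  · exact toPSL_diag_mem_DG hX
  · exact absurd h had'

theorem diag_or_antidiag_of_commute_negP {g : PSL2} (hg : Commute g negP) :
    (∃ a d h, g = toPSL (mkSL2 a 0 0 d h)) ∨ ∃ b c h, g = toPSL (mkSL2 0 b c 0 h) := by
  obtain ⟨x, y, z, w, hX, rfl⟩ := exists_eq_toPSL_mkSL2 g
  rw [negP_eq_toPSL] at hg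
  rcases diag_or_antidiag_of_commute_diag (by norm_num [Complex.ext_iff]) hg with
    ⟨rfl, rfl⟩ | ⟨rfl, rfl, -⟩
  · exact Or.inl ⟨x, w, hX, rfl⟩
  · exact Or.inr ⟨y, z, hX, rfl⟩

theorem toPSL_diag_eq_one_or_negP {a d : ℂ} {h : a * d - 0 * 0 = 1} (had : d = a ∨ d = -a) :
    toPSL (mkSL2 a 0 0 d h) = 1 ∨ toPSL (mkSL2 a 0 0 d h) = negP := by
  rcases had with rfl | rfl
  · left
    rw [← toPSL_mkSL2_one, toPSL_mkSL2_eq_iff]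
    rcases mul_self_eq_one_iff.mp (by linear_combination h : d * d = 1) with rfl | rfl
    · exact Or.inl ⟨rfl, rfl, rfl, rfl⟩
    · exact Or.inr ⟨rfl, by simp, by simp, rfl⟩
  · right
    rw [negP_eq_toPSL, toPSL_mkSL2_eq_iff]
    rcases mul_self_eq_mul_self_iff.mp (by linear_combination -h - I_mul_I : a * a = I * I)
      with rfl | rfl
    · exact Or.inl ⟨rfl, rfl, rfl, rfl⟩
    · exact Or.inr ⟨rfl, by simp, by simp, rfl⟩

theorem negP_mul_iotaP_eq_toPSL : negP * iotaP = toPSL (mkSL2 0 (-1) 1 0 (by ring)) := by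
  rw [negP_eq_toPSL, iotaP_eq_toPSL, toPSL_mkSL2_mul, toPSL_mkSL2_eq_iff]
  exact Or.inl ⟨by ring, by simp, by simp, by ring⟩

theorem toPSL_antidiag_eq_iotaP_or {b c : ℂ} {h : 0 * 0 - b * c = 1} (hbc : c = b ∨ c = -b) :
    toPSL (mkSL2 0 b c 0 h) = iotaP ∨ toPSL (mkSL2 0 b c 0 h) = negP * iotaP := by
  rcases hbc with rfl | rfl
  · left
    rw [iotaP_eq_toPSL, toPSL_mkSL2_eq_iff]
    rcases mul_self_eq_mul_self_iff.mp (by linear_combination -h - I_mul_I : c * c = I * I)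
      with rfl | rfl
    · exact Or.inl ⟨rfl, rfl, rfl, rfl⟩
    · exact Or.inr ⟨by simp, rfl, rfl, by simp⟩
  · right
    rw [negP_mul_iotaP_eq_toPSL, toPSL_mkSL2_eq_iff]
    rcases mul_self_eq_one_iff.mp (by linear_combination h : b * b = 1) with rfl | rfl
    · exact Or.inr ⟨by simp, by simp, rfl, by simp⟩
    · exact Or.inl ⟨rfl, rfl, by simp, rfl⟩

-- The Klein four-group, as the common centralizer of its generators (see `mem_KleinG_iff`).
def KleinG : Subgroup PSL2 := Subgroup.centralizer {negP, iotaP}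

theorem commute_negP_iotaP : Commute negP iotaP := by
  rw [negP_eq_toPSL, iotaP_eq_toPSL, commute_toPSL_mkSL2_iff]
  exact Or.inr ⟨by ring, by ring, by ring, by ring⟩

theorem kleinFour_cases_of_commute {g : PSL2} (hn : Commute g negP) (hi : Commute g iotaP) :
    g = 1 ∨ g = negP ∨ g = iotaP ∨ g = negP * iotaP := by
  rcases diag_or_antidiag_of_commute_negP hn with ⟨a, d, h, rfl⟩ | ⟨b, c, h, rfl⟩
  · rw [iotaP_eq_toPSL, commute_toPSL_mkSL2_iff] at hi
    have had : d = a ∨ d = -a := by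
      rcases hi with ⟨-, h2, -, -⟩ | ⟨-, h2, -, -⟩
      · exact Or.inl (mul_right_cancel₀ I_ne_zero (by linear_combination -h2))
      · exact Or.inr (mul_right_cancel₀ I_ne_zero (by linear_combination h2))
    rcases toPSL_diag_eq_one_or_negP (h := h) had with h1 | h1 <;> simp [h1]
  · rw [iotaP_eq_toPSL, commute_toPSL_mkSL2_iff] at hi
    have hbc : c = b ∨ c = -b := by
      rcases hi with ⟨h1, -, -, -⟩ | ⟨h1, -, -, -⟩
      · exact Or.inl (mul_right_cancel₀ I_ne_zero (by linear_combination -h1))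
      · exact Or.inr (mul_right_cancel₀ I_ne_zero (by linear_combination h1))
    rcases toPSL_antidiag_eq_iotaP_or (h := h) hbc with h1 | h1 <;> simp [h1]

theorem mem_KleinG_iff {g : PSL2} :
    g ∈ KleinG ↔ g ∈ ({1, negP, iotaP, negP * iotaP} : Set PSL2) := by
  have hn : negP ∈ KleinG :=
    Subgroup.mem_centralizer_iff.2 (by simp [commute_negP_iotaP.eq])
  have hi : iotaP ∈ KleinG :=
    Subgroup.mem_centralizer_iff.2 (by simp [commute_negP_iotaP.eq])
  constructor
  · intro hg
    have := Subgroup.mem_centralizer_iff.1 hg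
    exact kleinFour_cases_of_commute (this negP (by simp)).symm
      (this iotaP (by simp)).symm
  · rintro (rfl | rfl | rfl | rfl)
    exacts [KleinG.one_mem, hn, hi, KleinG.mul_mem hn hi]

theorem KleinG_comm : ∀ a ∈ KleinG, ∀ b ∈ KleinG, a * b = b * a := by
  intro a ha b hb
  have hbn : Commute negP b := Subgroup.mem_centralizer_iff.1 hb negP (by simp)
  have hbi : Commute iotaP b := Subgroup.mem_centralizer_iff.1 hb iotaP (by simp)
  rcases mem_KleinG_iff.1 ha with rfl | rfl | rfl | rfl
  exacts [(Commute.one_left b).eq, hbn.eq, hbi.eq, (hbn.mul_left hbi).eq]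

theorem exists_conj_antidiag_eq_iotaP {b c : ℂ} (h : 0 * 0 - b * c = 1) :
    ∃ e : PSL2,
      MulAut.conj e (toPSL (mkSL2 0 b c 0 h)) = iotaP ∧ MulAut.conj e negP = negP := by
  have hb : b ≠ 0 := by rintro rfl; simp at h
  -- Conjugation by `diag(r, r⁻¹)` scales the antidiagonal entries by `r²` and `r⁻²`.
  obtain ⟨r, hr⟩ := IsAlgClosed.exists_eq_mul_self (I / b)
  have hr0 : r ≠ 0 := by rintro rfl; simp [hb] at hr
  have hrb : r * r * b = I := by rw [← hr]; field_simp
  rw [iotaP_eq_toPSL, negP_eq_toPSL]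
  refine ⟨toPSL (mkSL2 r 0 0 r⁻¹ (by simp [hr0])), conj_toPSL_eq_of_mul_eq ?_,
    conj_toPSL_eq_of_mul_eq ?_⟩ <;> rw [mkSL2_mul, mkSL2_mul, mkSL2_eq_iff]
  · refine ⟨by ring, ?_, ?_, by ring⟩
    · field_simp; linear_combination hrb
    · field_simp
      linear_combination (I * r ^ 2) * h + (I * c) * hrb + c * I_sq
  · exact ⟨by ring, by ring, by ring, by ring⟩

theorem exists_mul_eq_upperTriangular_mul (A : SL2) :
    ∃ (P : SL2) (a b d : ℂ) (h : a * d - b * 0 = 1), P * A = mkSL2 a b 0 d h * P := by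
  obtain ⟨x, y, z, w, hX, rfl⟩ := exists_eq_mkSL2 A
  by_cases hz : z = 0
  · subst hz
    exact ⟨1, x, y, w, hX, by rw [one_mul, mul_one]⟩
  -- `(x + w + s) / 2` is an eigenvalue of `A` and the first column of `P⁻¹` an eigenvector.
  obtain ⟨s, hs⟩ := IsAlgClosed.exists_eq_mul_self ((x + w) ^ 2 - 4)
  have hl : (x + w + s) / 2 * ((x + w - s) / 2) = 1 := by linear_combination (1 / 4 : ℂ) * hs
  refine ⟨mkSL2 0 1 (-1) (((x + w + s) / 2 - w) / z) (by ring), _, -z, _, by simpa using hl, ?_⟩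
  rw [mkSL2_mul, mkSL2_mul, mkSL2_eq_iff]
  refine ⟨by ring, ?_, by field_simp; ring, ?_⟩
  · field_simp; ring
  · field_simp
    linear_combination (4 : ℂ) * hX - hs

theorem exists_mul_upperTriangular_eq_diag_mul {a b d : ℂ} {h : a * d - b * 0 = 1}
    (had : a ≠ d) :
    ∃ P : SL2, P * mkSL2 a b 0 d h = mkSL2 a 0 0 d (by linear_combination h) * P := by
  have had' : a - d ≠ 0 := sub_ne_zero.mpr had
  refine ⟨mkSL2 1 (b / (a - d)) 0 1 (by ring), ?_⟩
  rw [mkSL2_mul, mkSL2_mul, mkSL2_eq_iff]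
  refine ⟨by ring, ?_, by ring, by ring⟩
  field_simp
  ring

theorem exists_conj_upperTriangular_eq_Tr_one {a b : ℂ} {h : a * a - b * 0 = 1} (hb : b ≠ 0) :
    ∃ e : PSL2, MulAut.conj e (toPSL (mkSL2 a b 0 a h)) = Tr 1 := by
  have ha : a * a = 1 := by linear_combination h
  -- Conjugation by `diag(r, r⁻¹)` scales `b` by `r²`, and `!![a, a; 0, a]` represents `Tr 1`
  -- because `a = ±1`.
  obtain ⟨r, hr⟩ := IsAlgClosed.exists_eq_mul_self (a / b)
  have hr0 : r ≠ 0 := by rintro rfl; simp [hb, left_ne_zero_of_mul_eq_one ha] at hr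
  have hrb : r * r * b = a := by rw [← hr]; field_simp
  refine ⟨toPSL (mkSL2 r 0 0 r⁻¹ (by simp [hr0])), ?_⟩
  rw [conj_toPSL_eq_of_mul_eq (B := mkSL2 a a 0 a (by linear_combination ha)), Tr_eq_toPSL,
    toPSL_mkSL2_eq_iff]
  · rcases mul_self_eq_one_iff.mp ha with rfl | rfl
    · exact Or.inl ⟨rfl, rfl, rfl, rfl⟩
    · exact Or.inr ⟨rfl, rfl, by simp, rfl⟩
  · rw [mkSL2_mul, mkSL2_mul, mkSL2_eq_iff]
    refine ⟨by ring, ?_, by ring, by ring⟩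
    field_simp
    linear_combination hrb

theorem exists_conj_eq_diag_or_Tr_one (g : PSL2) :
    (∃ (c : PSL2) (a d : ℂ) (h : a * d - 0 * 0 = 1),
        MulAut.conj c g = toPSL (mkSL2 a 0 0 d h)) ∨
      ∃ c : PSL2, MulAut.conj c g = Tr 1 := by
  obtain ⟨A, rfl⟩ := QuotientGroup.mk'_surjective _ g
  obtain ⟨P, a, b, d, h, hP⟩ := exists_mul_eq_upperTriangular_mul A
  have hT := conj_toPSL_eq_of_mul_eq hP
  by_cases had : a = d
  · subst had
    by_cases hb : b = 0
    · subst hb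
      exact Or.inl ⟨toPSL P, a, a, h, hT⟩
    · obtain ⟨e, he⟩ := exists_conj_upperTriangular_eq_Tr_one hb
      exact Or.inr ⟨e * toPSL P, by rw [map_mul, MulAut.mul_apply, hT, he]⟩
  · obtain ⟨Q, hQ⟩ := exists_mul_upperTriangular_eq_diag_mul had
    exact Or.inl ⟨toPSL Q * toPSL P, a, d, _, by
      rw [map_mul, MulAut.mul_apply, hT, conj_toPSL_eq_of_mul_eq hQ]⟩

theorem exists_conj_mapsTo_DG_or_KleinG_of_conj_eq_negP {H : Subgroup PSL2}
    (hab : ∀ a ∈ H, ∀ b ∈ H, a * b = b * a) {c₀ g₀ : PSL2} (hg₀ : g₀ ∈ H)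
    (hc₀ : MulAut.conj c₀ g₀ = negP) :
    ∃ c : PSL2, Set.MapsTo (MulAut.conj c) H DG ∨ Set.MapsTo (MulAut.conj c) H KleinG := by
  have hcomm : ∀ c, ∀ g ∈ H, ∀ g' ∈ H, Commute (MulAut.conj c g) (MulAut.conj c g') :=
    fun c g hg g' hg' => Commute.map (hab g hg g' hg') (MulAut.conj c)
  by_cases hanti : ∃ g₁ ∈ H, ∃ b c h, MulAut.conj c₀ g₁ = toPSL (mkSL2 0 b c 0 h)
  · obtain ⟨g₁, hg₁, b, c, h, hc₁⟩ := hanti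
    obtain ⟨e, he₁, he₀⟩ := exists_conj_antidiag_eq_iotaP h
    have hconj : ∀ x, MulAut.conj (e * c₀) x = MulAut.conj e (MulAut.conj c₀ x) := fun x => by
      rw [map_mul, MulAut.mul_apply]
    refine ⟨e * c₀, Or.inr fun g hg => mem_KleinG_iff.2 (kleinFour_cases_of_commute ?_ ?_)⟩
    · simpa only [hconj, hc₀, he₀] using hcomm (e * c₀) g hg g₀ hg₀
    · simpa only [hconj, hc₁, he₁] using hcomm (e * c₀) g hg g₁ hg₁
  · push Not at hanti
    refine ⟨c₀, Or.inl fun g hg => ?_⟩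
    rcases diag_or_antidiag_of_commute_negP (hc₀ ▸ hcomm c₀ g hg g₀ hg₀) with
      ⟨a, d, h, hd⟩ | ⟨b, c, h, hb⟩
    · rw [hd]
      exact toPSL_diag_mem_DG h
    · exact absurd hb (hanti g hg b c h)

theorem exists_conj_mapsTo_DG_or_TG_or_KleinG {H : Subgroup PSL2}
    (hab : ∀ a ∈ H, ∀ b ∈ H, a * b = b * a) :
    ∃ c : PSL2, Set.MapsTo (MulAut.conj c) H DG ∨ Set.MapsTo (MulAut.conj c) H TG ∨
      Set.MapsTo (MulAut.conj c) H KleinG := by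
  by_cases htriv : ∀ g ∈ H, g = 1
  · refine ⟨1, Or.inl fun g hg => ?_⟩
    rw [htriv g hg, map_one]
    exact DG.one_mem
  push Not at htriv
  obtain ⟨g₀, hg₀, hne⟩ := htriv
  have hcomm : ∀ c, ∀ g ∈ H, Commute (MulAut.conj c g) (MulAut.conj c g₀) :=
    fun c g hg => Commute.map (hab g hg g₀ hg₀) (MulAut.conj c)
  rcases exists_conj_eq_diag_or_Tr_one g₀ with ⟨c, a, d, h, hc⟩ | ⟨c, hc⟩
  · by_cases had : d = a ∨ d = -a
    · rcases toPSL_diag_eq_one_or_negP (h := h) had with h1 | hneg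
      · rw [h1, map_eq_one_iff _ (MulAut.conj c).injective] at hc
        exact absurd hc hne
      · obtain ⟨c', hc'⟩ :=
          exists_conj_mapsTo_DG_or_KleinG_of_conj_eq_negP hab hg₀ (hc.trans hneg)
        exact ⟨c', hc'.imp_right Or.inr⟩
    · push Not at had
      refine ⟨c, Or.inl fun g hg => mem_DG_of_commute_diag had.1.symm ?_ (hc ▸ hcomm c g hg)⟩
      exact fun h' => had.2 (by rw [h', neg_neg])
  · exact ⟨c, Or.inr (Or.inl fun g hg => mem_TG_of_commute_Tr_one (hc ▸ hcomm c g hg))⟩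

/-- Every maximal abelian subgroup of `PSL(2,ℂ)` is conjugate to the full diagonal group
`{z ↦ a z : a ∈ ℂ*}`, the full translation group `{z ↦ z + b : b ∈ ℂ}`, or the Klein
four-group `{id, z ↦ -z, z ↦ 1/z, z ↦ -1/z}`. -/
theorem stmt15 (H : Subgroup PSL2) (hab : ∀ a ∈ H, ∀ b ∈ H, a * b = b * a)
    (hmax : ∀ K : Subgroup PSL2, (∀ a ∈ K, ∀ b ∈ K, a * b = b * a) → H ≤ K → K = H) :
    ∃ c : PSL2,
      (fun g => c * g * c⁻¹) '' (H : Set PSL2) = Dset ∨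
      (fun g => c * g * c⁻¹) '' (H : Set PSL2) = Tset ∨
      (fun g => c * g * c⁻¹) '' (H : Set PSL2) = {1, negP, iotaP, negP * iotaP} := by
  obtain ⟨c, hc⟩ := exists_conj_mapsTo_DG_or_TG_or_KleinG hab
  refine ⟨c, ?_⟩
  rcases hc with hc | hc | hc
  · exact Or.inl (image_conj_eq_of_maximal_abelian hmax DG_comm hc)
  · exact Or.inr (Or.inl (image_conj_eq_of_maximal_abelian hmax TG_comm hc))
  · refine Or.inr (Or.inr ?_)
    rw [image_conj_eq_of_maximal_abelian hmax KleinG_comm hc]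
    ext
    exact mem_KleinG_iff
end
end

section
/- The space of closed subgroups of the circle group S¹, with the Chabauty topology, is homeomorphic to the one-point compactification of ℕ: the finite cyclic subgroups of order n converge to S¹ itself as n → ∞. -/
open Filter Topology
/-!
Pulled back along `Circle.exp`, a subgroup of `S¹` becomes a subgroup of `ℝ`, which is either
dense or cyclic; hence a closed subgroup of `S¹` is `S¹` itself or finite, and a finite subgroup
of order `n` lies in, hence equals, the group `μ_n` of `n`-th roots of unity. So `n ↦ μ_{n+1}`,
`∞ ↦ S¹` is a bijection `OnePoint ℕ → ClosedSubgroups S¹`. It is continuous because `μ_n`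
eventually meets every nonempty open set, and it is a homeomorphism because `OnePoint ℕ` is
compact while the Chabauty space of a locally compact group is Hausdorff.
-/

open Set Real

namespace ClosedSubgroups

variable {G : Type*} [Group G] [TopologicalSpace G]

instance : Top (ClosedSubgroups G) := ⟨⟨⊤, isClosed_univ⟩⟩

@[simp] lemma top_val : (⊤ : ClosedSubgroups G).1 = ⊤ := rfl

lemma isOpen_setOf_inter_eq_empty {K : Set G} (hK : IsCompact K) :
    IsOpen {H : ClosedSubgroups G | (H.1 : Set G) ∩ K = ∅} :=
  isOpen_induced_iff (t := chabautyTopSet G).mpr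
    ⟨_, TopologicalSpace.isOpen_generateFrom_of_mem (Or.inl ⟨K, hK, rfl⟩), rfl⟩

lemma isOpen_setOf_inter_nonempty {U : Set G} (hU : IsOpen U) :
    IsOpen {H : ClosedSubgroups G | ((H.1 : Set G) ∩ U).Nonempty} :=
  isOpen_induced_iff (t := chabautyTopSet G).mpr
    ⟨_, TopologicalSpace.isOpen_generateFrom_of_mem (Or.inr ⟨U, hU, rfl⟩), rfl⟩

/-- A point `g ∈ A \ B` has a compact neighbourhood `K` missing `B`; then "meets `interior K`"
and "misses `K`" are disjoint Chabauty neighbourhoods of `A` and `B`. -/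
lemma exists_separating_of_mem_of_notMem [LocallyCompactSpace G] {A B : ClosedSubgroups G}
    {g : G} (hA : g ∈ A.1) (hB : g ∉ B.1) :
    ∃ u v : Set (ClosedSubgroups G), IsOpen u ∧ IsOpen v ∧ A ∈ u ∧ B ∈ v ∧ Disjoint u v := by
  obtain ⟨K, hKg, hKB, hK⟩ := local_compact_nhds (B.2.isOpen_compl.mem_nhds hB)
  refine ⟨_, _, isOpen_setOf_inter_nonempty isOpen_interior, isOpen_setOf_inter_eq_empty hK,
    ⟨g, hA, mem_interior_iff_mem_nhds.mpr hKg⟩, ?_, ?_⟩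
  · exact disjoint_iff_inter_eq_empty.mp (subset_compl_iff_disjoint_left.mp hKB)
  · exact disjoint_left.mpr fun H ⟨x, hxH, hxK⟩ hH => hH.subset ⟨hxH, interior_subset hxK⟩

instance [LocallyCompactSpace G] : T2Space (ClosedSubgroups G) := by
  refine t2Space_iff _ |>.mpr fun A B hAB => ?_
  obtain ⟨g, hg⟩ : ∃ g, ¬(g ∈ A.1 ↔ g ∈ B.1) := by
    by_contra! h
    exact hAB (Subtype.ext (SetLike.ext h))
  by_cases hgA : g ∈ A.1
  · exact exists_separating_of_mem_of_notMem hgA (fun hgB => hg (iff_of_true hgA hgB))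
  · have hgB : g ∈ B.1 := by tauto
    obtain ⟨u, v, hu, hv, hBu, hAv, huv⟩ := exists_separating_of_mem_of_notMem hgB hgA
    exact ⟨v, u, hv, hu, hAv, hBu, huv.symm⟩

lemma tendsto_nhds_top {ι : Type*} {l : Filter ι} {H : ι → ClosedSubgroups G}
    (h : ∀ U : Set G, IsOpen U → U.Nonempty → ∀ᶠ i in l, ((H i).1 ∩ U : Set G).Nonempty) :
    Tendsto H l (𝓝 ⊤) := by
  let := chabautyTopSet G
  rw [nhds_induced, tendsto_comap_iff]
  refine TopologicalSpace.tendsto_nhds_generateFrom_iff.mpr ?_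
  rintro _ (⟨K, -, rfl⟩ | ⟨U, hU, rfl⟩) hmem
  · obtain rfl : K = ∅ := by simpa using hmem
    simp
  · exact h U hU (by simpa using hmem)

end ClosedSubgroups

namespace Circle

instance : Infinite Circle :=
  infinite_univ_iff.mp <| infinite_of_injOn_mapsTo (exp_injOn_Ico (a := 0) (sub_zero _).le)
    (mapsTo_univ _ _) (Ico_infinite two_pi_pos)

noncomputable def mu (n : ℕ) : Subgroup Circle := (powMonoidHom n).ker

@[simp] lemma mem_mu {n : ℕ} {z : Circle} : z ∈ mu n ↔ z ^ n = 1 := Iff.rfl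

lemma natCard_mu (n : ℕ) [NeZero n] : Nat.card (mu n) = n := by
  refine (Nat.card_congr ?_).trans (HasEnoughRootsOfUnity.natCard_rootsOfUnity Circle n)
  exact _root_.toUnits.toEquiv.subtypeEquiv fun z => by simp [mem_rootsOfUnity, ← map_pow]

lemma finite_mu (n : ℕ) [NeZero n] : (mu n : Set Circle).Finite :=
  finite_coe_iff.mp (Nat.finite_of_card_ne_zero ((natCard_mu n).trans_ne (NeZero.ne n)))

instance (n : ℕ) [NeZero n] : Finite (mu n) := (finite_mu n).to_subtype

lemma eq_mu_natCard (H : Subgroup Circle) [Finite H] : H = mu (Nat.card H) := by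
  have : NeZero (Nat.card H) := ⟨Nat.card_pos.ne'⟩
  refine Subgroup.eq_of_le_of_card_ge (fun z hz => ?_) (natCard_mu _).le
  exact congrArg Subtype.val (pow_card_eq_one' (x := (⟨z, hz⟩ : H)))

lemma eq_top_or_finite_of_isClosed {H : Subgroup Circle} (hH : IsClosed (H : Set Circle)) :
    H = ⊤ ∨ Finite H := by
  let A : AddSubgroup ℝ := H.toAddSubgroup.comap expHom
  have hA : ∀ t, t ∈ A ↔ exp t ∈ H := fun t => Iff.rfl
  rcases A.dense_or_cyclic with hdense | ⟨a, ha⟩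
  · have : Dense (H : Set Circle) := (exp_surjective.denseRange.dense_image exp.continuous
      hdense).mono (image_subset_iff.mpr fun t ht => ht)
    exact Or.inl <| SetLike.coe_injective <| by
      rw [← hH.closure_eq, this.closure_eq, Subgroup.coe_top]
  · have hmem : ∀ t ∈ A, ∃ k : ℤ, k • a = t := fun t ht =>
      AddSubgroup.mem_closure_singleton.mp (ha ▸ ht)
    obtain ⟨k, hk⟩ := hmem (2 * π) ((hA _).mpr (exp_two_pi ▸ H.one_mem))
    have hk0 : k ≠ 0 := by
      rintro rfl
      linarith [pi_pos, zero_smul ℤ a]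
    have hfin : IsOfFinOrder (exp a) :=
      isOfFinOrder_iff_zpow_eq_one.mpr ⟨k, hk0, by rw [← exp_zsmul, hk, exp_two_pi]⟩
    have hle : H ≤ Subgroup.zpowers (exp a) := fun z hz => by
      obtain ⟨m, hm⟩ := hmem (z : ℂ).arg ((hA _).mpr (by rwa [exp_arg]))
      exact Subgroup.mem_zpowers_iff.mpr ⟨m, by rw [← exp_zsmul, hm, exp_arg]⟩
    have := hfin.finite_zpowers.to_subtype
    exact Or.inr (Finite.of_injective _ (Subgroup.inclusion_injective hle))

lemma exp_two_pi_div_mem_mu (n : ℕ) [NeZero n] : exp (2 * π / n) ∈ mu n := by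
  rw [mem_mu, ← exp_natCast_mul, mul_div_cancel₀ _ (Nat.cast_ne_zero.mpr (NeZero.ne n)),
    exp_two_pi]

/-- Points of `μ_n` are `2π/n` apart in angle, so once `2π/n` is below the radius of an
arc inside `U`, some `n`-th root of unity lies in `U`. -/
lemma eventually_mu_inter_nonempty {U : Set Circle} (hU : IsOpen U) (hne : U.Nonempty) :
    ∀ᶠ n in atTop, ((mu n : Set Circle) ∩ U).Nonempty := by
  obtain ⟨z, hz⟩ := hne
  obtain ⟨t, rfl⟩ := exp_surjective z
  obtain ⟨ε, hε, hball⟩ := Metric.isOpen_iff.mp (hU.preimage exp.continuous) t hz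
  filter_upwards [tendsto_natCast_atTop_atTop.eventually_gt_atTop (2 * π / ε)] with n hn
  have hn0 : (0 : ℝ) < n := (div_pos two_pi_pos hε).trans hn
  have : NeZero n := ⟨Nat.cast_pos.mp hn0 |>.ne'⟩
  set δ := 2 * π / n
  have hδ : 0 < δ := div_pos two_pi_pos hn0
  have hδε : δ < ε := (div_lt_comm₀ hε hn0).mp hn
  obtain ⟨hk₀, hkδ⟩ := sub_toIcoDiv_zsmul_mem_Ico hδ 0 t
  refine ⟨exp (toIcoDiv hδ 0 t • δ), ?_, hball ?_⟩
  · rw [SetLike.mem_coe, exp_zsmul]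
    exact (mu n).zpow_mem (exp_two_pi_div_mem_mu n) _
  · rw [Metric.mem_ball, Real.dist_eq, abs_sub_comm, abs_lt]
    constructor <;> linarith

noncomputable def closedMu (n : ℕ) [NeZero n] : ClosedSubgroups Circle :=
  ⟨mu n, (finite_mu n).isClosed⟩

@[simp] lemma closedMu_val (n : ℕ) [NeZero n] : (closedMu n).1 = mu n := rfl

lemma closedMu_ne_top (n : ℕ) [NeZero n] : closedMu n ≠ ⊤ := fun h => by
  have h' : mu n = ⊤ := congrArg Subtype.val h
  exact infinite_univ (α := Circle) (Subgroup.coe_top (G := Circle) ▸ h' ▸ finite_mu n)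

lemma closedMu_inj {m n : ℕ} [NeZero m] [NeZero n] : closedMu m = closedMu n ↔ m = n :=
  ⟨fun h => by
    have := congrArg (fun H : ClosedSubgroups Circle => Nat.card H.1) h
    simpa only [closedMu_val, natCard_mu] using this,
   fun h => by subst h; rfl⟩

lemma tendsto_closedMu_atTop :
    Tendsto (fun n => closedMu (n + 1)) atTop (𝓝 (⊤ : ClosedSubgroups Circle)) :=
  ClosedSubgroups.tendsto_nhds_top fun _U hU hne =>
    tendsto_add_atTop_nat 1 |>.eventually (eventually_mu_inter_nonempty hU hne)

-- The index is shifted because `mu 0 = ⊤` (every `z` satisfies `z ^ 0 = 1`).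
noncomputable def closedSubgroupOfOnePoint (p : OnePoint ℕ) : ClosedSubgroups Circle :=
  p.elim ⊤ fun n => closedMu (n + 1)

lemma continuous_closedSubgroupOfOnePoint : Continuous closedSubgroupOfOnePoint :=
  (OnePoint.continuous_iff_from_nat _).mpr tendsto_closedMu_atTop

lemma bijective_closedSubgroupOfOnePoint : Function.Bijective closedSubgroupOfOnePoint := by
  refine ⟨?_, fun H => ?_⟩
  · rintro (_ | m) (_ | n) h
    · rfl
    · exact absurd h.symm (closedMu_ne_top _)
    · exact absurd h (closedMu_ne_top _)
    · exact congrArg some (Nat.succ_injective (closedMu_inj.mp h))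
  · rcases eq_top_or_finite_of_isClosed H.2 with h | h
    · exact ⟨OnePoint.infty, Subtype.ext h.symm⟩
    · refine ⟨(Nat.card H.1 - 1 : ℕ), Subtype.ext ?_⟩
      rw [closedSubgroupOfOnePoint, OnePoint.elim_some, closedMu_val,
        Nat.sub_add_cancel Nat.card_pos, ← eq_mu_natCard]

noncomputable def closedSubgroupsHomeomorphOnePoint : ClosedSubgroups Circle ≃ₜ OnePoint ℕ :=
  (continuous_closedSubgroupOfOnePoint.homeoOfEquivCompactToT2
    (f := Equiv.ofBijective _ bijective_closedSubgroupOfOnePoint)).symm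

end Circle

/-- The space of closed subgroups of the circle group `S¹`, with the Chabauty topology, is
homeomorphic to the one-point compactification of `ℕ`; moreover the finite (cyclic)
subgroups of order `n` converge to `S¹` itself as `n → ∞`. -/
theorem stmt19 :
    Nonempty (ClosedSubgroups Circle ≃ₜ OnePoint ℕ) ∧
    ∀ H : ℕ → ClosedSubgroups Circle, (∀ n, Nat.card (H n).1 = n + 1) →
      Filter.Tendsto H Filter.atTop
        (nhds (⟨⊤, by rw [Subgroup.coe_top]; exact isClosed_univ⟩ :
          ClosedSubgroups Circle)) := by
  refine ⟨⟨Circle.closedSubgroupsHomeomorphOnePoint⟩, fun H hH => ?_⟩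
  have hH' : H = fun n => Circle.closedMu (n + 1) := by
    funext n
    have : Finite (H n).1 := Nat.finite_of_card_ne_zero (by simp [hH])
    exact Subtype.ext ((Circle.eq_mu_natCard _).trans (by rw [hH]; rfl))
  exact hH' ▸ Circle.tendsto_closedMu_atTop
end
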